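/- arXiv:math/0503180 — 4 statements merged into one kernel-verified Lean document; each statement's English description precedes it below -/
import Mathlib

section
/- Assume ℘ = ℘₁ : (mS)^∞, and let η be an integer such that for every μ ≥ η one has ℘ ∩ S_{[μ]} = ℘₁ ∩ S_{[μ]} (i.e., the m-torsion of the symmetric algebra S/℘₁ vanishes in all X-degrees ≥ η). Then the annihilator in R' of the R'-module S_{[η]}/(℘₁ ∩ S_{[η]}) equals ℘ ∩ R'. -/
open MvPolynomial

/-!
If `g ∈ R'` kills `S_{[η]}/(℘₁ ∩ S_{[η]})`, then in particular `g · C p ∈ ℘₁` for every form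
`p ∈ R` of degree `η`; these forms generate `m^η`, so `g · (mS)^η ⊆ ℘₁` and `g` lies in the
saturation `℘₁ : (mS)^∞ = ℘`. Conversely, multiplying by `g ∈ R'` preserves the `X`-degree, so for
`g ∈ ℘` and `s ∈ S_{[η]}` the product `g s` lies in `℘ ∩ S_{[η]} = ℘₁ ∩ S_{[η]}`.
-/

/-- An element `F` of `S = R[T_0, …, T_n]` (with `R = k[X_1, …, X_n]`) is `X`-homogeneous of
degree `μ` if all of its coefficients (with respect to the `T`-monomials) are homogeneous
polynomials of degree `μ` in the `X`-variables. -/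
def XHomogeneous {k : Type*} [Field k] {n : ℕ} (μ : ℕ)
    (s : MvPolynomial (Fin (n + 1)) (MvPolynomial (Fin n) k)) : Prop :=
  ∀ e : (Fin (n + 1)) →₀ ℕ, (MvPolynomial.coeff e s).IsHomogeneous μ

theorem MvPolynomial.span_range_X_pow_le {σ R : Type*} [CommSemiring R]
    {Q : Ideal (MvPolynomial σ R)} {j : ℕ}
    (hQ : ∀ p : MvPolynomial σ R, p.IsHomogeneous j → p ∈ Q) :
    Ideal.span (Set.range X) ^ j ≤ Q := by
  rw [Ideal.span, Submodule.span_pow, Submodule.span_le]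
  intro p hp
  apply hQ
  rw [← mem_homogeneousSubmodule, ← homogeneousSubmodule_one_pow,
    homogeneousSubmodule_one_eq_span_X]
  exact Submodule.pow_subset_pow _ (Set.pow_subset_pow_left Submodule.subset_span hp)

section XHomogeneous

variable {k : Type*} [Field k] {n : ℕ}

theorem XHomogeneous.mul {μ ν : ℕ} {s t : MvPolynomial (Fin (n + 1)) (MvPolynomial (Fin n) k)}
    (hs : XHomogeneous μ s) (ht : XHomogeneous ν t) : XHomogeneous (μ + ν) (s * t) := fun e => by
  rw [coeff_mul]
  exact IsHomogeneous.sum _ _ _ fun x _ => (hs x.1).mul (ht x.2)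

theorem xHomogeneous_zero_map_C (g : MvPolynomial (Fin (n + 1)) k) :
    XHomogeneous 0 (map (C : k →+* MvPolynomial (Fin n) k) g) := fun e => by
  rw [coeff_map]
  exact isHomogeneous_C _ _

theorem xHomogeneous_C {μ : ℕ} {p : MvPolynomial (Fin n) k} (hp : p.IsHomogeneous μ) :
    XHomogeneous μ (C p : MvPolynomial (Fin (n + 1)) (MvPolynomial (Fin n) k)) := fun e => by
  rw [coeff_C]
  split_ifs
  exacts [hp, isHomogeneous_zero _ _ _]

end XHomogeneous

theorem annihilator_of_graded_piece_of_symmetric_algebra_eq_elimination_ideal_general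
    {k : Type*} [Field k] (n : ℕ)
    (m : Ideal (MvPolynomial (Fin n) k))
    (hm : m = Ideal.span (Set.range (MvPolynomial.X : Fin n → MvPolynomial (Fin n) k)))
    (P : Ideal (MvPolynomial (Fin (n + 1)) (MvPolynomial (Fin n) k)))
    (P₁ : Ideal (MvPolynomial (Fin (n + 1)) (MvPolynomial (Fin n) k)))
    -- `℘ = ℘₁ : (mS)^∞`:
    (hsat : P = ⨆ j : ℕ, Submodule.colon P₁
      (((m.map (MvPolynomial.C :
        MvPolynomial (Fin n) k →+* MvPolynomial (Fin (n + 1)) (MvPolynomial (Fin n) k))) ^ j :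
          Ideal (MvPolynomial (Fin (n + 1)) (MvPolynomial (Fin n) k))) :
          Set (MvPolynomial (Fin (n + 1)) (MvPolynomial (Fin n) k))))
    (η : ℕ)
    -- `℘` and `℘₁` agree in every `X`-degree `μ ≥ η`:
    (hη : ∀ μ, η ≤ μ → ∀ s : MvPolynomial (Fin (n + 1)) (MvPolynomial (Fin n) k),
      XHomogeneous μ s → (s ∈ P ↔ s ∈ P₁)) :
    -- the annihilator of `S_{[η]}/(℘₁ ∩ S_{[η]})` in `R' = k[T_0, …, T_n]` equals `℘ ∩ R'`:
    {g : MvPolynomial (Fin (n + 1)) k |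
        ∀ s : MvPolynomial (Fin (n + 1)) (MvPolynomial (Fin n) k), XHomogeneous η s →
          MvPolynomial.map (MvPolynomial.C : k →+* MvPolynomial (Fin n) k) g * s ∈ P₁} =
      {g : MvPolynomial (Fin (n + 1)) k |
        MvPolynomial.map (MvPolynomial.C : k →+* MvPolynomial (Fin n) k) g ∈ P} := by
  ext g
  set G := map (C : k →+* MvPolynomial (Fin n) k) g
  constructor
  · intro hg
    have hforms : ∀ p : MvPolynomial (Fin n) k, p.IsHomogeneous η →
        p ∈ (P₁.colon {G}).comap C := fun p hp => by
      simpa [mul_comm] using hg _ (xHomogeneous_C hp)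
    have hpow : m.map C ^ η ≤ P₁.colon {G} := by
      rw [← Ideal.map_pow, Ideal.map_le_iff_le_comap, hm]
      exact span_range_X_pow_le hforms
    rw [hsat]
    refine Ideal.mem_iSup_of_mem η (Submodule.mem_colon.2 fun x hx => ?_)
    simpa [mul_comm] using hpow hx
  · intro hg s hs
    have hGs : XHomogeneous η (G * s) := by
      simpa using (xHomogeneous_zero_map_C g).mul hs
    exact (hη η le_rfl _ hGs).1 (P.mul_mem_right s hg)

/-- Suppose `℘` (the defining ideal of the Rees algebra of `I = (f_0, …, f_n)`) is the
`mS`-saturation of the linear syzygy ideal `℘₁`, and let `η` be such that `℘` and `℘₁`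
agree in all `X`-degrees `μ ≥ η`.  Then the annihilator in `R' = k[T_0, …, T_n]` of the
`R'`-module `S_{[η]}/(℘₁ ∩ S_{[η]})` is exactly `℘ ∩ R'`. -/
theorem annihilator_of_graded_piece_of_symmetric_algebra_eq_elimination_ideal
    {k : Type*} [Field k] (n : ℕ) (hn : 2 ≤ n) (d : ℕ) (hd : 1 ≤ d)
    (f : Fin (n + 1) → MvPolynomial (Fin n) k)
    (hf : ∀ i, (f i).IsHomogeneous d)
    (I : Ideal (MvPolynomial (Fin n) k))
    (hI : I = Ideal.span (Set.range f))
    (m : Ideal (MvPolynomial (Fin n) k))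
    (hm : m = Ideal.span (Set.range (MvPolynomial.X : Fin n → MvPolynomial (Fin n) k)))
    -- `℘` is the kernel of `S = R[T_0, …, T_n] → R[u]`, `T_i ↦ f_i u`:
    (P : Ideal (MvPolynomial (Fin (n + 1)) (MvPolynomial (Fin n) k)))
    (hP : P = RingHom.ker (MvPolynomial.aeval
        (fun i => Polynomial.C (f i) * Polynomial.X) :
        MvPolynomial (Fin (n + 1)) (MvPolynomial (Fin n) k)
          →ₐ[MvPolynomial (Fin n) k] Polynomial (MvPolynomial (Fin n) k)))
    -- `℘₁` is the ideal generated by the linear syzygies: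
    (P₁ : Ideal (MvPolynomial (Fin (n + 1)) (MvPolynomial (Fin n) k)))
    (hP₁ : P₁ = Ideal.span {p | ∃ a : Fin (n + 1) → MvPolynomial (Fin n) k,
        (∑ i, a i * f i = 0) ∧ p = ∑ i, MvPolynomial.C (a i) * MvPolynomial.X i})
    -- `℘ = ℘₁ : (mS)^∞`:
    (hsat : P = ⨆ j : ℕ, Submodule.colon P₁
      (((m.map (MvPolynomial.C :
        MvPolynomial (Fin n) k →+* MvPolynomial (Fin (n + 1)) (MvPolynomial (Fin n) k))) ^ j :
          Ideal (MvPolynomial (Fin (n + 1)) (MvPolynomial (Fin n) k))) :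
          Set (MvPolynomial (Fin (n + 1)) (MvPolynomial (Fin n) k))))
    (η : ℕ)
    -- `℘` and `℘₁` agree in every `X`-degree `μ ≥ η`:
    (hη : ∀ μ, η ≤ μ → ∀ s : MvPolynomial (Fin (n + 1)) (MvPolynomial (Fin n) k),
      XHomogeneous μ s → (s ∈ P ↔ s ∈ P₁)) :
    -- the annihilator of `S_{[η]}/(℘₁ ∩ S_{[η]})` in `R' = k[T_0, …, T_n]` equals `℘ ∩ R'`:
    {g : MvPolynomial (Fin (n + 1)) k |
        ∀ s : MvPolynomial (Fin (n + 1)) (MvPolynomial (Fin n) k), XHomogeneous η s →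
          MvPolynomial.map (MvPolynomial.C : k →+* MvPolynomial (Fin n) k) g * s ∈ P₁} =
      {g : MvPolynomial (Fin (n + 1)) k |
        MvPolynomial.map (MvPolynomial.C : k →+* MvPolynomial (Fin n) k) g ∈ P} :=
  annihilator_of_graded_piece_of_symmetric_algebra_eq_elimination_ideal_general n m hm P P₁ hsat η
    hη
end

section
/- In the polynomial ring R = ℚ[a,b,c], let I = (ac², b²(a+c), ab(a+c), bc(a+c)). Then the saturation of I with respect to the irrelevant ideal (a,b,c) is the complete intersection ideal (ac², b(a+c)): I : (a,b,c)^∞ = (ac², b(a+c)). -/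
/-!
Write `J = (ac², b(a+c))` and `m = (a,b,c)`. Since `I ⊆ J` and `J·m ⊆ I`, it suffices to show
`J : m = J`. Repeatedly using `(z,x) ∩ (z,y) = (z,xy)` when `x` is a nonzerodivisor modulo `(z,y)`,
`J = (a,b) ∩ (b,c²) ∩ (ac², a+c)`, and `c`, `a`, `b` are nonzerodivisors modulo these three ideals:
the first two are monomial ideals not involving that variable, and the change of variables
`c ↦ c + a` turns the third into the monomial ideal `(a³, c)` while fixing `b`.
-/

open MvPolynomial

/-- The saturation `I : q^∞ = ⋃_{j ≥ 0} (I : q^j)` of an ideal `I` with respect to an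
ideal `q`. -/
noncomputable def idealSat {A : Type*} [CommRing A] (I q : Ideal A) : Ideal A :=
  ⨆ j : ℕ, Submodule.colon I ((q ^ j : Ideal A) : Set A)

local notation "a" => (MvPolynomial.X 0 : MvPolynomial (Fin 3) ℚ)
local notation "b" => (MvPolynomial.X 1 : MvPolynomial (Fin 3) ℚ)
local notation "c" => (MvPolynomial.X 2 : MvPolynomial (Fin 3) ℚ)

open Ideal

section Saturation

variable {A : Type*} [CommRing A]

theorem idealSat_le {I J q : Ideal A} (hIJ : I ≤ J) (hJ : J.colon (q : Set A) ≤ J) :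
    idealSat I q ≤ J := by
  refine iSup_le fun j => ?_
  induction j with
  | zero => simpa [one_eq_top] using hIJ
  | succ j ih =>
    intro r hr
    refine hJ (Submodule.mem_colon.2 fun x hx => ih (Submodule.mem_colon.2 fun p hp => ?_))
    have hxp : x * p ∈ q ^ (j + 1) := pow_succ' q j ▸ mul_mem_mul hx hp
    simpa [mul_assoc] using Submodule.mem_colon.1 hr _ hxp

theorem le_idealSat {I J q : Ideal A} (h : J * q ≤ I) : J ≤ idealSat I q := fun _ hr =>
  Submodule.mem_iSup_of_mem 1 <| Submodule.mem_colon.2 fun _ hs =>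
    h (mul_mem_mul hr (pow_one q ▸ hs))

end Saturation

theorem Ideal.span_pair_inf_span_pair_le {R : Type*} [CommRing R] {z x y : R}
    (hx : ∀ v, v * x ∈ span {z, y} → v ∈ span {z, y}) :
    span {z, x} ⊓ span {z, y} ≤ span {z, x * y} := by
  rintro f ⟨hfx, hfy⟩
  obtain ⟨u, w, rfl⟩ := mem_span_pair.1 hfx
  have hw : w * x ∈ span {z, y} :=
    (add_mem_cancel_left (mul_mem_left _ u (subset_span (by simp)))).1 hfy
  obtain ⟨p, q, rfl⟩ := mem_span_pair.1 (hx w hw)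
  exact mem_span_pair.2 ⟨u + p * x, q, by ring⟩

theorem Ideal.mem_map_of_mul_mem_map {R S : Type*} [CommRing R] [CommRing S] {e : R ≃+* S}
    {I : Ideal R} {x : R} (hx : ∀ v, v * x ∈ I → v ∈ I) {w : S} (hw : w * e x ∈ I.map e) :
    w ∈ I.map e := by
  rw [← symm_apply_mem_of_equiv_iff] at hw ⊢
  exact hx _ (by simpa using hw)

namespace MvPolynomial

variable {σ R : Type*}

theorem mem_span_monomial_image_of_mul_X_mem [CommSemiring R] {S : Set (σ →₀ ℕ)} {k : σ}
    (hS : ∀ s ∈ S, s k = 0) {f : MvPolynomial σ R}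
    (h : f * X k ∈ span ((fun s => monomial s (1 : R)) '' S)) :
    f ∈ span ((fun s => monomial s (1 : R)) '' S) := by
  rw [mem_ideal_span_monomial_image] at h ⊢
  intro m hm
  obtain ⟨s, hs, hle⟩ := h (m + Finsupp.single k 1)
    (by rw [support_mul_X]; exact Finset.mem_map_of_mem _ hm)
  refine ⟨s, hs, fun j => ?_⟩
  by_cases hj : j = k
  · simp [hj, hS s hs]
  · simpa [Finsupp.single_apply, Ne.symm hj] using hle j

theorem mem_span_X_pow_pair_of_mul_X_mem [CommSemiring R] {i j k : σ} (hi : i ≠ k) (hj : j ≠ k)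
    {m n : ℕ} {f : MvPolynomial σ R} (h : f * X k ∈ span {X i ^ m, X j ^ n}) :
    f ∈ span {X i ^ m, X j ^ n} := by
  have hmon : (span {X i ^ m, X j ^ n} : Ideal (MvPolynomial σ R)) =
      span ((fun s => monomial s (1 : R)) '' {Finsupp.single i m, Finsupp.single j n}) := by
    simp [Set.image_pair, X_pow_eq_monomial]
  rw [hmon] at h ⊢
  refine mem_span_monomial_image_of_mul_X_mem ?_ h
  rintro s (rfl | rfl) <;> simp [hi, hj]

variable [CommRing R] [DecidableEq σ]

noncomputable def addXEquiv (i j : σ) (hij : i ≠ j) : MvPolynomial σ R ≃ₐ[R] MvPolynomial σ R :=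
  AlgEquiv.ofAlgHom (aeval (Function.update X i (X i + X j)))
    (aeval (Function.update X i (X i - X j)))
    (algHom_ext fun k => by
      by_cases hk : k = i <;> simp [Function.update, hk, hij.symm])
    (algHom_ext fun k => by
      by_cases hk : k = i <;> simp [Function.update, hk, hij.symm])

theorem addXEquiv_X (i j k : σ) (hij : i ≠ j) :
    addXEquiv (R := R) i j hij (X k) = if k = i then X i + X j else X k := by
  by_cases hk : k = i <;> simp [addXEquiv, Function.update, hk]

end MvPolynomial

theorem span_ac2_add_eq_map_addXEquiv :
    (span {a * c ^ 2, a + c} : Ideal (MvPolynomial (Fin 3) ℚ)) =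
      (span {a ^ 3, c}).map (addXEquiv 2 0 (by decide)).toRingEquiv := by
  rw [map_span, Set.image_pair]
  simp only [AlgEquiv.coe_ringEquiv, map_pow, addXEquiv_X]
  rw [show a * c ^ 2 = a ^ 3 + a * (c - a) * (a + c) by ring, span_pair_add_mul_right]
  simp [add_comm]

theorem mem_of_mul_mem_span_ab {f : MvPolynomial (Fin 3) ℚ} (h : f * c ∈ span {a, b}) :
    f ∈ span {a, b} := by
  simpa using mem_span_X_pow_pair_of_mul_X_mem (k := 2) (m := 1) (n := 1) (by decide) (by decide)
    (by simpa using h)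

theorem mem_of_mul_mem_span_bc2 {f : MvPolynomial (Fin 3) ℚ} (h : f * a ∈ span {b, c ^ 2}) :
    f ∈ span {b, c ^ 2} := by
  simpa using mem_span_X_pow_pair_of_mul_X_mem (k := 0) (m := 1) (by decide) (by decide)
    (by simpa using h)

theorem mem_of_mul_mem_span_ac2_add {f : MvPolynomial (Fin 3) ℚ}
    (h : f * b ∈ span {a * c ^ 2, a + c}) : f ∈ span {a * c ^ 2, a + c} := by
  rw [span_ac2_add_eq_map_addXEquiv] at h ⊢
  have hb : (addXEquiv (R := ℚ) 2 0 (by decide)).toRingEquiv b = b := by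
    simp [addXEquiv_X]
  refine mem_map_of_mul_mem_map (fun v hv => ?_) (hb ▸ h)
  simpa using mem_span_X_pow_pair_of_mul_X_mem (k := 1) (n := 1) (by decide) (by decide)
    (by simpa using hv)

theorem colon_span_abc_le :
    (span {a * c ^ 2, b * (a + c)}).colon (span {a, b, c} : Set (MvPolynomial (Fin 3) ℚ)) ≤
      span {a * c ^ 2, b * (a + c)} := by
  intro f hf
  rw [Submodule.colon_span, Submodule.mem_colon] at hf
  obtain ⟨p₁, q₁, h₁⟩ := mem_span_pair.1 (hf a (by simp))
  obtain ⟨p₂, q₂, h₂⟩ := mem_span_pair.1 (hf b (by simp))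
  obtain ⟨p₃, q₃, h₃⟩ := mem_span_pair.1 (hf c (by simp))
  have hab : f ∈ span {b, a} := by
    rw [span_pair_comm]
    exact mem_of_mul_mem_span_ab <|
      mem_span_pair.2 ⟨p₃ * c ^ 2, q₃ * (a + c), by rw [smul_eq_mul] at h₃; linear_combination h₃⟩
  have hbc : f ∈ span {b, c ^ 2} := mem_of_mul_mem_span_bc2 <|
    mem_span_pair.2 ⟨q₁ * (a + c), p₁ * a, by rw [smul_eq_mul] at h₁; linear_combination h₁⟩
  have hac : f ∈ span {a * c ^ 2, a + c} := mem_of_mul_mem_span_ac2_add <|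
    mem_span_pair.2 ⟨p₂, q₂ * b, by rw [smul_eq_mul] at h₂; linear_combination h₂⟩
  have hbac : f ∈ span {a * c ^ 2, b} := by
    rw [span_pair_comm]
    exact span_pair_inf_span_pair_le (fun _ => mem_of_mul_mem_span_bc2) (mem_inf.2 ⟨hab, hbc⟩)
  exact span_pair_inf_span_pair_le (fun _ => mem_of_mul_mem_span_ac2_add) (mem_inf.2 ⟨hbac, hac⟩)

/-- In `R = ℚ[a,b,c]`, the saturation of `I = (ac², b²(a+c), ab(a+c), bc(a+c))` with
respect to the irrelevant ideal `(a,b,c)` is the complete intersection ideal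
`(ac², b(a+c))`. -/
theorem saturation_of_example_ideal :
    idealSat
        (Ideal.span {a * c ^ 2, b ^ 2 * (a + c), a * b * (a + c), b * c * (a + c)})
        (Ideal.span {a, b, c}) =
      Ideal.span {a * c ^ 2, b * (a + c)} := by
  refine le_antisymm (idealSat_le ?_ colon_span_abc_le) (le_idealSat ?_)
  · refine span_le.2 ?_
    rintro _ (rfl | rfl | rfl | rfl)
    · exact mem_span_pair.2 ⟨1, 0, by ring⟩
    · exact mem_span_pair.2 ⟨0, b, by ring⟩
    · exact mem_span_pair.2 ⟨0, a, by ring⟩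
    · exact mem_span_pair.2 ⟨0, c, by ring⟩
  · rw [span_mul_span', span_le]
    rintro _ ⟨_, (rfl | rfl), _, (rfl | rfl | rfl), rfl⟩
    any_goals exact mul_mem_right _ _ (subset_span (Or.inl rfl))
    · exact subset_span (Or.inr <| Or.inr <| Or.inl <| by ring)
    · exact subset_span (Or.inr <| Or.inl <| by ring)
    · exact subset_span (Or.inr <| Or.inr <| Or.inr <| Set.mem_singleton_of_eq <| by ring)
end

section
/- Let ℘ be the kernel of the ℚ-algebra homomorphism ℚ[a,b,c,x,y,z,t] → ℚ[a,b,c,u] fixing a, b, c and sending x ↦ ac²·u, y ↦ b²(a+c)·u, z ↦ ab(a+c)·u, t ↦ bc(a+c)·u. Then ℘ equals the ideal (ay−bz, at−cz, bt−cy, act−b(a+c)x, bx(z+t)−at², xy(z+t)−zt²), and moreover ℘ = (ay−bz, at−cz, bt−cy, act−b(a+c)x) : ((a,b,c))², the colon of the linear syzygy ideal ℘₁ by the square of the ideal generated by a, b, c. -/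
open MvPolynomial

set_option maxHeartbeats 1000000
set_option synthInstance.maxHeartbeats 1000000

-- variables of `S = ℚ[a,b,c,x,y,z,t]`
local notation "a" => (MvPolynomial.X 0 : MvPolynomial (Fin 7) ℚ)
local notation "b" => (MvPolynomial.X 1 : MvPolynomial (Fin 7) ℚ)
local notation "c" => (MvPolynomial.X 2 : MvPolynomial (Fin 7) ℚ)
local notation "x" => (MvPolynomial.X 3 : MvPolynomial (Fin 7) ℚ)
local notation "y" => (MvPolynomial.X 4 : MvPolynomial (Fin 7) ℚ)
local notation "z" => (MvPolynomial.X 5 : MvPolynomial (Fin 7) ℚ)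
local notation "t" => (MvPolynomial.X 6 : MvPolynomial (Fin 7) ℚ)

-- variables of `ℚ[a,b,c,u]`
local notation "A" => (MvPolynomial.X 0 : MvPolynomial (Fin 4) ℚ)
local notation "B" => (MvPolynomial.X 1 : MvPolynomial (Fin 4) ℚ)
local notation "CC" => (MvPolynomial.X 2 : MvPolynomial (Fin 4) ℚ)
local notation "U" => (MvPolynomial.X 3 : MvPolynomial (Fin 4) ℚ)

noncomputable section ReesAux

abbrev S7 : Type := MvPolynomial (Fin 7) ℚ
abbrev B3 : Type := MvPolynomial (Fin 3) ℚ
abbrev PB : Type := Polynomial B3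
abbrev PPB : Type := Polynomial PB
abbrev R4 : Type := MvPolynomial (Fin 4) ℚ

def va : B3 := MvPolynomial.X 0
def vb : B3 := MvPolynomial.X 1
def vc : B3 := MvPolynomial.X 2

@[simp] lemma vec7_5 {α : Type*} (a₀ a₁ a₂ a₃ a₄ a₅ a₆ : α) :
    ![a₀,a₁,a₂,a₃,a₄,a₅,a₆] 5 = a₅ := rfl
@[simp] lemma vec7_6 {α : Type*} (a₀ a₁ a₂ a₃ a₄ a₅ a₆ : α) :
    ![a₀,a₁,a₂,a₃,a₄,a₅,a₆] 6 = a₆ := rfl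

/-- `C ∘ C : B3 → PPB` -/
def CQ (w : B3) : PPB := Polynomial.C (Polynomial.C w)

/-- the monomial map `Ψ : ℚ[a,b,c,x,y,z,t] → B3[U][V]`,
`x ↦ a c² U`, `y ↦ b V`, `z ↦ a V`, `t ↦ c V`. -/
def Psi : S7 →ₐ[ℚ] PPB :=
  MvPolynomial.aeval
    ![CQ va, CQ vb, CQ vc,
      Polynomial.C (Polynomial.C (va * vc ^ 2) * Polynomial.X),
      CQ vb * Polynomial.X, CQ va * Polynomial.X, CQ vc * Polynomial.X]

def evB : B3 →ₐ[ℚ] R4 :=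
  MvPolynomial.aeval ![MvPolynomial.X 0, MvPolynomial.X 1, MvPolynomial.X 2]

def evU : PB →ₐ[ℚ] R4 := Polynomial.aevalTower evB (MvPolynomial.X 3)

def evV : PPB →ₐ[ℚ] R4 :=
  Polynomial.aevalTower evU
    (MvPolynomial.X 1 * (MvPolynomial.X 0 + MvPolynomial.X 2) * MvPolynomial.X 3)

def phi : S7 →ₐ[ℚ] R4 :=
  MvPolynomial.aeval
    ![MvPolynomial.X 0, MvPolynomial.X 1, MvPolynomial.X 2,
      MvPolynomial.X 0 * MvPolynomial.X 2 ^ 2 * MvPolynomial.X 3,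
      MvPolynomial.X 1 ^ 2 * (MvPolynomial.X 0 + MvPolynomial.X 2) * MvPolynomial.X 3,
      MvPolynomial.X 0 * MvPolynomial.X 1 * (MvPolynomial.X 0 + MvPolynomial.X 2) * MvPolynomial.X 3,
      MvPolynomial.X 1 * MvPolynomial.X 2 * (MvPolynomial.X 0 + MvPolynomial.X 2) * MvPolynomial.X 3]

lemma phi_eq (F : S7) : phi F = evV (Psi F) := by
  have h : phi = evV.comp Psi := by
    apply MvPolynomial.algHom_ext
    intro i
    fin_cases i <;>
      simp [phi, Psi, evV, evU, evB, CQ, va, vb, vc, Matrix.cons_val_succ] <;> ring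
  rw [h]; rfl

/-! ### ideals in `B3` and the `ε` grading trick -/

def mB : Ideal B3 := Ideal.span {va, vb, vc}
def Pd : Ideal B3 := Ideal.span {va * vc ^ 2}
def bd : B3 := vb * (va + vc)

def eps : B3 →ₐ[ℚ] PB :=
  MvPolynomial.aeval
    ![Polynomial.C va * Polynomial.X, Polynomial.C vb * Polynomial.X,
      Polynomial.C vc * Polynomial.X]

lemma eval_one_eps (f : B3) : (eps f).eval 1 = f := by
  have h : ((Polynomial.evalRingHom (1 : B3)).comp (eps : B3 →+* PB)) =
      RingHom.id B3 := by
    apply MvPolynomial.ringHom_ext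
    · intro q
      simp [eps, MvPolynomial.algebraMap_eq]
    · intro i
      fin_cases i <;> simp [eps, va, vb, vc]
  exact congrArg (fun g => g f) h

lemma X_dvd_eps_of_mem {f : B3} (hf : f ∈ mB) : Polynomial.X ∣ eps f := by
  induction hf using Submodule.span_induction with
  | mem w hw =>
    rcases hw with h | h | h <;> subst h <;>
      · rw [show (Polynomial.X : PB) ∣ _ ↔ _ from Polynomial.X_dvd_iff]
        simp [eps, va, vb, vc]
  | zero => simp
  | add f g _ _ hf hg => rw [map_add]; exact dvd_add hf hg
  | smul r f _ hf =>
    rw [smul_eq_mul, map_mul]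
    exact hf.mul_left _

lemma eps_dvd_of_mem : ∀ (n : ℕ) (f : B3), f ∈ mB ^ n → Polynomial.X ^ n ∣ eps f := by
  intro n
  induction n with
  | zero => intro f _; simpa using one_dvd _
  | succ n ih =>
    intro f hf
    rw [pow_succ] at hf
    refine Submodule.mul_induction_on hf ?_ ?_
    · intro u hu v hv
      rw [map_mul, pow_succ]
      exact mul_dvd_mul (ih u hu) (X_dvd_eps_of_mem hv)
    · intro f g hf hg
      rw [map_add]; exact dvd_add hf hg

def gvec : Fin 3 → B3 := ![va, vb, vc]

lemma eps_X_eq (i : Fin 3) :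
    eps (MvPolynomial.X i) = Polynomial.C (gvec i) * Polynomial.X := by
  fin_cases i <;> simp [eps, gvec, va, vb, vc]

lemma gvec_mem (i : Fin 3) : gvec i ∈ mB := by
  fin_cases i <;> exact Ideal.subset_span (by simp [gvec, mB])

lemma coeff_eps_mem (f : B3) : ∀ j : ℕ, (eps f).coeff j ∈ mB ^ j := by
  induction f using MvPolynomial.induction_on with
  | C q =>
    intro j
    cases j with
    | zero => rw [pow_zero, Ideal.one_eq_top]; trivial
    | succ j =>
      have : eps (MvPolynomial.C q) = Polynomial.C (MvPolynomial.C q) := by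
        simp [eps, MvPolynomial.algebraMap_eq]
      rw [this]
      simp
  | add f g hf hg =>
    intro j
    rw [map_add, Polynomial.coeff_add]
    exact add_mem (hf j) (hg j)
  | mul_X f i hf =>
    intro j
    have key : ∀ (g : B3), g ∈ mB →
        (eps f * (Polynomial.C g * Polynomial.X)).coeff j ∈ mB ^ j := by
      intro g hg
      cases j with
      | zero => simp [Polynomial.mul_coeff_zero]
      | succ j =>
        have : eps f * (Polynomial.C g * Polynomial.X) =
            Polynomial.C g * (Polynomial.X * eps f) := by ring
        rw [this, Polynomial.coeff_C_mul, Polynomial.coeff_X_mul, pow_succ, mul_comm (mB ^ j) mB]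
        exact Ideal.mul_mem_mul hg (hf j)
    rw [map_mul, eps_X_eq]
    exact key _ (gvec_mem i)

lemma mem_of_eps_dvd {f : B3} {n : ℕ} (h : Polynomial.X ^ n ∣ eps f) : f ∈ mB ^ n := by
  rw [show f = (eps f).eval 1 from (eval_one_eps f).symm, Polynomial.eval_eq_sum]
  apply Submodule.sum_mem
  intro j hj
  rcases le_or_gt n j with hle | hlt
  · simpa using Ideal.pow_le_pow_right hle (coeff_eps_mem f j)
  · rw [Polynomial.X_pow_dvd_iff] at h
    rw [Polynomial.mem_support_iff] at hj
    exact absurd (h j hlt) hj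

lemma va_add_vc_ne : va + vc ≠ (0 : B3) := by
  intro h
  have := congrArg (MvPolynomial.aeval (![1, 1, 1] : Fin 3 → ℚ)) h
  simp [va, vc] at this

lemma bd_ne : bd ≠ 0 := mul_ne_zero (MvPolynomial.X_ne_zero _) va_add_vc_ne

lemma eps_bd : eps bd = Polynomial.C bd * Polynomial.X ^ 2 := by
  simp [eps, bd, va, vb, vc]
  ring

lemma L2' {f : B3} {n : ℕ} (h : bd * f ∈ mB ^ n) : f ∈ mB ^ (n - 2) := by
  match n, h with
  | 0, h => rw [Nat.zero_sub, pow_zero, Ideal.one_eq_top]; trivial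
  | 1, h => rw [show (1:ℕ) - 2 = 0 by rfl, pow_zero, Ideal.one_eq_top]; trivial
  | (m+2), h =>
    have hd : Polynomial.X ^ (m + 2) ∣ eps (bd * f) := eps_dvd_of_mem _ _ h
    rw [map_mul, eps_bd] at hd
    have hd2 : Polynomial.X ^ m * Polynomial.X ^ 2 ∣
        (Polynomial.C bd * eps f) * Polynomial.X ^ 2 := by
      rw [← pow_add]
      calc Polynomial.X ^ (m + 2) ∣ Polynomial.C bd * Polynomial.X ^ 2 * eps f := hd
        _ = Polynomial.C bd * eps f * Polynomial.X ^ 2 := by ring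
    have hXne : (Polynomial.X : PB) ^ 2 ≠ 0 := pow_ne_zero _ Polynomial.X_ne_zero
    have hd3 : Polynomial.X ^ m ∣ Polynomial.C bd * eps f :=
      (mul_dvd_mul_iff_right hXne).mp hd2
    have hnd : ¬ (Polynomial.X : PB) ∣ Polynomial.C bd := by
      rw [Polynomial.X_dvd_iff, Polynomial.coeff_C_zero]
      exact bd_ne
    have hd4 : Polynomial.X ^ m ∣ eps f :=
      Polynomial.prime_X.pow_dvd_of_dvd_mul_left m hnd hd3
    simpa using mem_of_eps_dvd hd4


/-! ### primes and divisibility in `B3` -/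

lemma prime_X_B3 (i : Fin 3) : Prime (MvPolynomial.X i : B3) := by
  have h0 : Prime (MvPolynomial.X 0 : B3) := by
    have hp := Polynomial.prime_X (R := MvPolynomial (Fin 2) ℚ)
    rw [← MvPolynomial.finSuccEquiv_X_zero (R := ℚ) (n := 2)] at hp
    exact (MulEquiv.prime_iff (p := (MvPolynomial.X 0 : B3))
      (MvPolynomial.finSuccEquiv ℚ 2).toRingEquiv.toMulEquiv).mp hp
  have hX : (MvPolynomial.renameEquiv ℚ (Equiv.swap (0 : Fin 3) i))
      (MvPolynomial.X 0) = MvPolynomial.X i := by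
    simp [MvPolynomial.renameEquiv_apply, MvPolynomial.rename_X]
  rw [← hX]
  exact (MulEquiv.prime_iff
    (MvPolynomial.renameEquiv ℚ (Equiv.swap (0 : Fin 3) i)).toRingEquiv.toMulEquiv).mpr h0

lemma prime_va : Prime va := prime_X_B3 0
lemma prime_vc : Prime vc := prime_X_B3 2

lemma not_va_dvd_bd : ¬ va ∣ bd := by
  rintro ⟨g, hg⟩
  have := congrArg (MvPolynomial.aeval (![0, vb, vc] : Fin 3 → B3)) hg
  simp [bd, va, vb, vc, MvPolynomial.X_ne_zero] at this

lemma not_vc_dvd_bd : ¬ vc ∣ bd := by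
  rintro ⟨g, hg⟩
  have := congrArg (MvPolynomial.aeval (![va, vb, 0] : Fin 3 → B3)) hg
  simp [bd, va, vb, vc, MvPolynomial.X_ne_zero] at this

lemma not_vc_dvd_va : ¬ vc ∣ va := by
  rintro ⟨g, hg⟩
  have := congrArg (MvPolynomial.aeval (![va, vb, 0] : Fin 3 → B3)) hg
  simp [va, vb, vc, MvPolynomial.X_ne_zero] at this

lemma dvd_combine {f : B3} (i j : ℕ) (ha : va ^ i ∣ f) (hc : vc ^ j ∣ f) :
    va ^ i * vc ^ j ∣ f := by
  obtain ⟨g, rfl⟩ := ha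
  have hnd : ¬ vc ∣ va ^ i := by
    intro h
    exact not_vc_dvd_va (prime_vc.dvd_of_dvd_pow h)
  obtain ⟨h, rfl⟩ := prime_vc.pow_dvd_of_dvd_mul_left j hnd hc
  exact ⟨h, by ring⟩

lemma acsq_ne : va * vc ^ 2 ≠ 0 :=
  mul_ne_zero (MvPolynomial.X_ne_zero _) (pow_ne_zero _ (MvPolynomial.X_ne_zero _))

/-- the key cancellation lemma. -/
lemma K1 {f : B3} {p i : ℕ} (h : bd * f ∈ Pd ^ p * mB ^ i) :
    f ∈ Pd ^ p * mB ^ (i - 2) := by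
  rw [Pd, Ideal.span_singleton_pow, Ideal.mem_span_singleton_mul] at h
  obtain ⟨w, hw, heq⟩ := h
  have hpow : (va * vc ^ 2) ^ p = va ^ p * vc ^ (2 * p) := by
    rw [mul_pow, ← pow_mul]
  have hdvd : (va * vc ^ 2) ^ p ∣ bd * f := Dvd.intro w heq
  have hva : va ^ p ∣ bd * f := dvd_trans ⟨vc ^ (2 * p), hpow⟩ hdvd
  have hvc : vc ^ (2 * p) ∣ bd * f := dvd_trans ⟨va ^ p, by rw [hpow]; ring⟩ hdvd
  have hva2 : va ^ p ∣ f := prime_va.pow_dvd_of_dvd_mul_left p not_va_dvd_bd hva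
  have hvc2 : vc ^ (2 * p) ∣ f := prime_vc.pow_dvd_of_dvd_mul_left _ not_vc_dvd_bd hvc
  obtain ⟨g, hg⟩ := dvd_combine p (2 * p) hva2 hvc2
  rw [← hpow] at hg
  subst hg
  have hcan : w = bd * g := by
    apply mul_left_cancel₀ (pow_ne_zero p acsq_ne)
    rw [heq]; ring
  subst hcan
  rw [Pd, Ideal.span_singleton_pow, Ideal.mem_span_singleton_mul]
  exact ⟨g, L2' hw, rfl⟩

lemma Pd_le_mB3 : Pd ≤ mB ^ 3 := by
  rw [Pd, Ideal.span_le, Set.singleton_subset_iff]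
  have h1 : va ∈ mB := Ideal.subset_span (by simp [mB])
  have h2 : vc ∈ mB := Ideal.subset_span (by simp [mB])
  have h3 : va * (vc * vc) ∈ mB * (mB * mB) :=
    Ideal.mul_mem_mul h1 (Ideal.mul_mem_mul h2 h2)
  have e : mB ^ 3 = mB * (mB * mB) := by ring
  rw [SetLike.mem_coe, e, show va * vc ^ 2 = va * (vc * vc) by ring]
  exact h3

/-- the main inductive step over anti-diagonals. -/
lemma main_ind (H : ℕ → ℕ → B3)
    (hc : ∀ p m : ℕ, (if 1 ≤ m then H p (m - 1) else 0)
        - bd * (if 1 ≤ p then H (p - 1) m else 0) ∈ Pd ^ p * mB ^ m) :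
    ∀ m p : ℕ, H p m ∈ Pd ^ (p + 1) * mB ^ (m - 2) := by
  intro m
  induction m with
  | zero =>
    intro p
    have h := hc (p + 1) 0
    simp only [show ¬ (1:ℕ) ≤ 0 by omega, if_false, if_pos (by omega : 1 ≤ p + 1),
      Nat.add_sub_cancel, zero_sub] at h
    have h2 : bd * H p 0 ∈ Pd ^ (p + 1) * mB ^ 0 := by
      simpa using (neg_mem_iff).mp h
    simpa using K1 h2
  | succ m ih =>
    intro p
    have h := hc (p + 1) (m + 1)
    simp only [if_pos (by omega : 1 ≤ m + 1), if_pos (by omega : 1 ≤ p + 1),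
      Nat.add_sub_cancel] at h
    have hmem : H (p + 1) m ∈ Pd ^ (p + 1) * mB ^ (m + 1) := by
      have h1 := ih (p + 1)
      have hle : Pd ^ (p + 2) * mB ^ (m - 2) ≤ Pd ^ (p + 1) * mB ^ (m + 1) := by
        have e1 : Pd ^ (p + 2) * mB ^ (m - 2) = Pd ^ (p + 1) * (Pd * mB ^ (m - 2)) := by
          rw [← mul_assoc, ← pow_succ]
        rw [e1]
        apply Ideal.mul_mono_right
        calc Pd * mB ^ (m - 2) ≤ mB ^ 3 * mB ^ (m - 2) :=
              Ideal.mul_mono_left Pd_le_mB3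
          _ = mB ^ (3 + (m - 2)) := by rw [pow_add]
          _ ≤ mB ^ (m + 1) := Ideal.pow_le_pow_right (by omega)
      exact hle h1
    have h2 : bd * H p (m + 1) ∈ Pd ^ (p + 1) * mB ^ (m + 1) := by
      have := sub_mem hmem h
      simpa using this
    have := K1 h2
    simpa using this


/-! ### coefficients of `Psi`-images -/

lemma Psi_X0 : Psi (MvPolynomial.X 0) = CQ va := by simp [Psi]
lemma Psi_X1 : Psi (MvPolynomial.X 1) = CQ vb := by simp [Psi]
lemma Psi_X2 : Psi (MvPolynomial.X 2) = CQ vc := by simp [Psi]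
lemma Psi_X3 : Psi (MvPolynomial.X 3) =
    Polynomial.C (Polynomial.C (va * vc ^ 2) * Polynomial.X) := by simp [Psi]
lemma Psi_X4 : Psi (MvPolynomial.X 4) = CQ vb * Polynomial.X := by simp [Psi]
lemma Psi_X5 : Psi (MvPolynomial.X 5) = CQ va * Polynomial.X := by simp [Psi]
lemma Psi_X6 : Psi (MvPolynomial.X 6) = CQ vc * Polynomial.X := by simp [Psi]

lemma CQ_def (w : B3) : CQ w = Polynomial.C (Polynomial.C w) := rfl

lemma mem_Pd : va * vc ^ 2 ∈ Pd := Ideal.subset_span rfl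
lemma va_mem : va ∈ mB := Ideal.subset_span (by simp [mB])
lemma vb_mem : vb ∈ mB := Ideal.subset_span (by simp [mB])
lemma vc_mem : vc ∈ mB := Ideal.subset_span (by simp [mB])

lemma psi_coeff_mem (F : S7) : ∀ (p m : ℕ), (((Psi F).coeff m).coeff p) ∈ Pd ^ p * mB ^ m := by
  induction F using MvPolynomial.induction_on with
  | C q =>
    intro p m
    have : Psi (MvPolynomial.C q) = CQ (MvPolynomial.C q) := by
      simp [Psi, CQ, MvPolynomial.algebraMap_eq]
    rw [this, CQ]
    match m, p with
    | 0, 0 =>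
      simp only [Polynomial.coeff_C_zero]
      rw [pow_zero, pow_zero, one_mul, Ideal.one_eq_top]; trivial
    | 0, (p+1) => simp
    | (m+1), _ => simp
  | add f g hf hg =>
    intro p m
    rw [map_add, Polynomial.coeff_add, Polynomial.coeff_add]
    exact add_mem (hf p m) (hg p m)
  | mul_X f i hf =>
    intro p m
    rw [map_mul]
    fin_cases i
    · -- a
      rw [show (⟨0, by omega⟩ : Fin 7) = (0 : Fin 7) from rfl, Psi_X0, CQ_def]
      rw [Polynomial.coeff_mul_C, Polynomial.coeff_mul_C]
      exact Ideal.mul_mem_right _ _ (hf p m)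
    · -- b
      rw [show (⟨1, by omega⟩ : Fin 7) = (1 : Fin 7) from rfl, Psi_X1, CQ_def]
      rw [Polynomial.coeff_mul_C, Polynomial.coeff_mul_C]
      exact Ideal.mul_mem_right _ _ (hf p m)
    · -- c
      rw [show (⟨2, by omega⟩ : Fin 7) = (2 : Fin 7) from rfl, Psi_X2, CQ_def]
      rw [Polynomial.coeff_mul_C, Polynomial.coeff_mul_C]
      exact Ideal.mul_mem_right _ _ (hf p m)
    · -- x
      rw [show (⟨3, by omega⟩ : Fin 7) = (3 : Fin 7) from rfl, Psi_X3]
      rw [Polynomial.coeff_mul_C]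
      match p with
      | 0 =>
        rw [Polynomial.mul_coeff_zero]
        simp
      | (p+1) =>
        have e1 : (Psi f).coeff m * (Polynomial.C (va * vc ^ 2) * Polynomial.X) =
            Polynomial.C (va * vc ^ 2) * (Polynomial.X * (Psi f).coeff m) := by ring
        rw [e1, Polynomial.coeff_C_mul, Polynomial.coeff_X_mul]
        have : (va * vc ^ 2) * (((Psi f).coeff m).coeff p) ∈ Pd * (Pd ^ p * mB ^ m) :=
          Ideal.mul_mem_mul mem_Pd (hf p m)
        have e2 : Pd * (Pd ^ p * mB ^ m) = Pd ^ (p + 1) * mB ^ m := by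
          rw [← mul_assoc, ← pow_succ']
        rwa [e2] at this
    · -- y
      rw [show (⟨4, by omega⟩ : Fin 7) = (4 : Fin 7) from rfl, Psi_X4]
      have e1 : Psi f * (CQ vb * Polynomial.X) = CQ vb * (Polynomial.X * Psi f) := by ring
      rw [e1, CQ]
      match m with
      | 0 =>
        rw [Polynomial.mul_coeff_zero, Polynomial.mul_coeff_zero]
        simp
      | (m+1) =>
        rw [Polynomial.coeff_C_mul, Polynomial.coeff_X_mul, Polynomial.coeff_C_mul]
        have : vb * (((Psi f).coeff m).coeff p) ∈ mB * (Pd ^ p * mB ^ m) :=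
          Ideal.mul_mem_mul vb_mem (hf p m)
        have e2 : mB * (Pd ^ p * mB ^ m) = Pd ^ p * mB ^ (m + 1) := by
          rw [pow_succ]; ring
        rwa [e2] at this
    · -- z
      rw [show (⟨5, by omega⟩ : Fin 7) = (5 : Fin 7) from rfl, Psi_X5]
      have e1 : Psi f * (CQ va * Polynomial.X) = CQ va * (Polynomial.X * Psi f) := by ring
      rw [e1, CQ]
      match m with
      | 0 =>
        rw [Polynomial.mul_coeff_zero, Polynomial.mul_coeff_zero]
        simp
      | (m+1) =>
        rw [Polynomial.coeff_C_mul, Polynomial.coeff_X_mul, Polynomial.coeff_C_mul]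
        have : va * (((Psi f).coeff m).coeff p) ∈ mB * (Pd ^ p * mB ^ m) :=
          Ideal.mul_mem_mul va_mem (hf p m)
        have e2 : mB * (Pd ^ p * mB ^ m) = Pd ^ p * mB ^ (m + 1) := by
          rw [pow_succ]; ring
        rwa [e2] at this
    · -- t
      rw [show (⟨6, by omega⟩ : Fin 7) = (6 : Fin 7) from rfl, Psi_X6]
      have e1 : Psi f * (CQ vc * Polynomial.X) = CQ vc * (Polynomial.X * Psi f) := by ring
      rw [e1, CQ]
      match m with
      | 0 =>
        rw [Polynomial.mul_coeff_zero, Polynomial.mul_coeff_zero]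
        simp
      | (m+1) =>
        rw [Polynomial.coeff_C_mul, Polynomial.coeff_X_mul, Polynomial.coeff_C_mul]
        have : vc * (((Psi f).coeff m).coeff p) ∈ mB * (Pd ^ p * mB ^ m) :=
          Ideal.mul_mem_mul vc_mem (hf p m)
        have e2 : mB * (Pd ^ p * mB ^ m) = Pd ^ p * mB ^ (m + 1) := by
          rw [pow_succ]; ring
        rwa [e2] at this

/-! ### preimages -/

def jB : B3 →ₐ[ℚ] S7 :=
  MvPolynomial.aeval ![MvPolynomial.X 0, MvPolynomial.X 1, MvPolynomial.X 2]

lemma Psi_jB (w : B3) : Psi (jB w) = CQ w := by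
  have h : Psi.comp jB =
      ((Polynomial.CAlgHom : PB →ₐ[ℚ] PPB).comp (Polynomial.CAlgHom : B3 →ₐ[ℚ] PB)) := by
    apply MvPolynomial.algHom_ext
    intro i
    fin_cases i <;> simp [jB, Psi, Polynomial.CAlgHom, CQ, va, vb, vc]
  have := congrArg (fun g => g w) h
  simpa [CQ] using this

lemma CQ_mul (u v : B3) : CQ (u * v) = CQ u * CQ v := by simp [CQ]

lemma preimage_mB : ∀ (n : ℕ) (w : B3), w ∈ mB ^ n →
    ∃ s : S7, Psi s = CQ w * Polynomial.X ^ n := by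
  intro n
  induction n with
  | zero =>
    intro w _
    exact ⟨jB w, by simp [Psi_jB]⟩
  | succ n ih =>
    intro w hw
    rw [pow_succ] at hw
    refine Submodule.mul_induction_on hw ?_ ?_
    · intro u hu v hv
      obtain ⟨su, hsu⟩ := ih u hu
      have hv1 : ∃ sv : S7, Psi sv = CQ v * Polynomial.X := by
        induction hv using Submodule.span_induction with
        | mem wv hwv =>
          rcases hwv with h | h | h
          · exact ⟨MvPolynomial.X 5, by rw [h, Psi_X5]⟩
          · exact ⟨MvPolynomial.X 4, by rw [h, Psi_X4]⟩
          · simp only [Set.mem_singleton_iff] at h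
            exact ⟨MvPolynomial.X 6, by rw [h, Psi_X6]⟩
        | zero => exact ⟨0, by simp [CQ]⟩
        | add f g _ _ hf hg =>
          obtain ⟨sf, hsf⟩ := hf
          obtain ⟨sg, hsg⟩ := hg
          exact ⟨sf + sg, by rw [map_add, hsf, hsg, CQ, CQ, CQ, map_add, map_add]; ring⟩
        | smul r f _ hf =>
          obtain ⟨sf, hsf⟩ := hf
          exact ⟨jB r * sf, by rw [map_mul, Psi_jB, hsf, smul_eq_mul, CQ_mul]; ring⟩
      obtain ⟨sv, hsv⟩ := hv1
      exact ⟨su * sv, by rw [map_mul, hsu, hsv, CQ_mul, pow_succ]; ring⟩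
    · intro f g hf hg
      obtain ⟨sf, hsf⟩ := hf
      obtain ⟨sg, hsg⟩ := hg
      exact ⟨sf + sg, by rw [map_add, hsf, hsg, CQ, CQ, CQ, map_add, map_add]; ring⟩

lemma preimage_PdmB (p n : ℕ) (w : B3) (hw : w ∈ Pd ^ p * mB ^ n) :
    ∃ s : S7, Psi s = CQ w * (Polynomial.C Polynomial.X) ^ p * Polynomial.X ^ n := by
  rw [Pd, Ideal.span_singleton_pow, Ideal.mem_span_singleton_mul] at hw
  obtain ⟨w₂, hw₂, rfl⟩ := hw
  obtain ⟨s₂, hs₂⟩ := preimage_mB n w₂ hw₂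
  refine ⟨MvPolynomial.X 3 ^ p * s₂, ?_⟩
  rw [map_mul, map_pow, Psi_X3, hs₂, CQ_mul, CQ, CQ, map_pow, map_pow]
  simp only [map_mul, map_pow, mul_pow]
  ring


/-! ### the toric kernel: `ker Psi = (ay - bz, at - cz, bt - cy)` -/

def f1 : S7 := MvPolynomial.X 0 * MvPolynomial.X 4 - MvPolynomial.X 1 * MvPolynomial.X 5
def f2 : S7 := MvPolynomial.X 0 * MvPolynomial.X 6 - MvPolynomial.X 2 * MvPolynomial.X 5
def f3 : S7 := MvPolynomial.X 1 * MvPolynomial.X 6 - MvPolynomial.X 2 * MvPolynomial.X 4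

def P0 : Ideal S7 := Ideal.span {f1, f2, f3}

def EB (d : Fin 7 →₀ ℕ) : Fin 3 →₀ ℕ :=
  Finsupp.single 0 (d 0 + d 3 + d 5) + Finsupp.single 1 (d 1 + d 4) +
    Finsupp.single 2 (d 2 + 2 * d 3 + d 6)

def Ep (d : Fin 7 →₀ ℕ) : ℕ := d 3
def Em (d : Fin 7 →₀ ℕ) : ℕ := d 4 + d 5 + d 6

lemma EB_apply (d : Fin 7 →₀ ℕ) :
    EB d 0 = d 0 + d 3 + d 5 ∧ EB d 1 = d 1 + d 4 ∧ EB d 2 = d 2 + 2 * d 3 + d 6 := by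
  refine ⟨?_, ?_, ?_⟩ <;> simp [EB, Finsupp.single_apply]

lemma psi_monomial (d : Fin 7 →₀ ℕ) (q : ℚ) :
    Psi (MvPolynomial.monomial d q) =
      Polynomial.monomial (Em d) (Polynomial.monomial (Ep d)
        (MvPolynomial.monomial (EB d) q)) := by
  rw [Psi, MvPolynomial.aeval_monomial,
    Finsupp.prod_fintype _ _ (fun i => pow_zero _), Fin.prod_univ_seven]
  rw [← Polynomial.C_mul_X_pow_eq_monomial, ← Polynomial.C_mul_X_pow_eq_monomial]
  rw [MvPolynomial.monomial_eq, Finsupp.prod_fintype _ _ (fun i => pow_zero _),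
    Fin.prod_univ_three]
  obtain ⟨h0, h1, h2⟩ := EB_apply d
  rw [h0, h1, h2, Ep, Em]
  simp only [Matrix.cons_val_zero, Matrix.cons_val_one, Matrix.head_cons,
    Matrix.cons_val_two, Matrix.tail_cons, Matrix.cons_val_three, Matrix.cons_val_four,
    vec7_5, vec7_6, CQ]
  rw [show (algebraMap ℚ PPB) q = Polynomial.C (Polynomial.C (MvPolynomial.C q)) by
    simp [MvPolynomial.algebraMap_eq, Polynomial.algebraMap_apply]]
  simp only [map_mul, map_pow, va, vb, vc]
  ring

def Nml (d : Fin 7 →₀ ℕ) : Prop :=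
  (d 0 = 0 ∨ d 4 = 0) ∧ (d 0 = 0 ∨ d 6 = 0) ∧ (d 1 = 0 ∨ d 6 = 0)

lemma E_inj {d d' : Fin 7 →₀ ℕ} (hd : Nml d) (hd' : Nml d')
    (h1 : EB d = EB d') (h2 : Ep d = Ep d') (h3 : Em d = Em d') : d = d' := by
  obtain ⟨a0, a1, a2⟩ := EB_apply d
  obtain ⟨b0, b1, b2⟩ := EB_apply d'
  have e0 : d 0 + d 3 + d 5 = d' 0 + d' 3 + d' 5 := by
    rw [← a0, ← b0, h1]
  have e1 : d 1 + d 4 = d' 1 + d' 4 := by rw [← a1, ← b1, h1]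
  have e2 : d 2 + 2 * d 3 + d 6 = d' 2 + 2 * d' 3 + d' 6 := by rw [← a2, ← b2, h1]
  simp only [Ep] at h2
  simp only [Em] at h3
  obtain ⟨hA, hB, hC⟩ := hd
  obtain ⟨hA', hB', hC'⟩ := hd'
  have q0 : d 0 = d' 0 := by omega
  have q1 : d 1 = d' 1 := by omega
  have q2 : d 2 = d' 2 := by omega
  have q3 : d 3 = d' 3 := by omega
  have q4 : d 4 = d' 4 := by omega
  have q5 : d 5 = d' 5 := by omega
  have q6 : d 6 = d' 6 := by omega
  ext i
  fin_cases i
  · exact q0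
  · exact q1
  · exact q2
  · exact q3
  · exact q4
  · exact q5
  · exact q6

/-- moving exponents along a binomial -/
lemma move_exps (d : Fin 7 →₀ ℕ) (i₁ i₂ j₁ j₂ : Fin 7) (hne : i₁ ≠ i₂)
    (h1 : 1 ≤ d i₁) (h2 : 1 ≤ d i₂) :
    ∃ d₂ : Fin 7 →₀ ℕ,
      (MvPolynomial.monomial d (1 : ℚ) - MvPolynomial.monomial d₂ 1) =
        MvPolynomial.monomial (d - Finsupp.single i₁ 1 - Finsupp.single i₂ 1) 1 *
          (MvPolynomial.X i₁ * MvPolynomial.X i₂ - MvPolynomial.X j₁ * MvPolynomial.X j₂) ∧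
      ∀ i, d₂ i = d i - (if i₁ = i then 1 else 0) - (if i₂ = i then 1 else 0)
          + (if j₁ = i then 1 else 0) + (if j₂ = i then 1 else 0) := by
  set e : Fin 7 →₀ ℕ := d - Finsupp.single i₁ 1 - Finsupp.single i₂ 1 with he
  refine ⟨e + Finsupp.single j₁ 1 + Finsupp.single j₂ 1, ?_, ?_⟩
  · have key : ∀ (ee : Fin 7 →₀ ℕ) (k₁ k₂ : Fin 7),
        MvPolynomial.monomial (ee + Finsupp.single k₁ 1 + Finsupp.single k₂ 1) (1 : ℚ) =
          MvPolynomial.monomial ee 1 * (MvPolynomial.X k₁ * MvPolynomial.X k₂) := by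
      intro ee k₁ k₂
      rw [MvPolynomial.X, MvPolynomial.X, MvPolynomial.monomial_mul,
        MvPolynomial.monomial_mul, mul_one, mul_one, add_assoc]
    have hed : e + Finsupp.single i₁ 1 + Finsupp.single i₂ 1 = d := by
      rw [he, tsub_tsub, add_assoc]
      refine tsub_add_cancel_of_le ?_
      rw [Finsupp.le_def]
      intro i
      rw [Finsupp.add_apply, Finsupp.single_apply, Finsupp.single_apply]
      by_cases e1 : i₁ = i
      · by_cases e2 : i₂ = i
        · exact absurd (e1.trans e2.symm) hne
        · subst e1; rw [if_pos rfl, if_neg e2]; omega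
      · by_cases e2 : i₂ = i
        · subst e2; rw [if_neg e1, if_pos rfl]; omega
        · rw [if_neg e1, if_neg e2]; omega
    calc MvPolynomial.monomial d (1:ℚ) - MvPolynomial.monomial
          (e + Finsupp.single j₁ 1 + Finsupp.single j₂ 1) 1
        = MvPolynomial.monomial (e + Finsupp.single i₁ 1 + Finsupp.single i₂ 1) 1 -
            MvPolynomial.monomial (e + Finsupp.single j₁ 1 + Finsupp.single j₂ 1) 1 := by
          rw [hed]
      _ = MvPolynomial.monomial e 1 *
            (MvPolynomial.X i₁ * MvPolynomial.X i₂ - MvPolynomial.X j₁ * MvPolynomial.X j₂) := by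
          rw [key, key, mul_sub]
  · intro i
    rw [Finsupp.add_apply, Finsupp.add_apply, he, Finsupp.tsub_apply, Finsupp.tsub_apply,
      Finsupp.single_apply, Finsupp.single_apply, Finsupp.single_apply, Finsupp.single_apply]

lemma f1_mem : f1 ∈ P0 := Ideal.subset_span (by simp [P0])
lemma f2_mem : f2 ∈ P0 := Ideal.subset_span (by simp [P0])
lemma f3_mem : f3 ∈ P0 := Ideal.subset_span (by simp [P0])

lemma normalize_aux : ∀ (N : ℕ) (d : Fin 7 →₀ ℕ), 2 * d 0 + d 1 ≤ N →
    ∃ d', Nml d' ∧ EB d' = EB d ∧ Ep d' = Ep d ∧ Em d' = Em d ∧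
      (MvPolynomial.monomial d (1 : ℚ) - MvPolynomial.monomial d' 1) ∈ P0 := by
  intro N
  induction N with
  | zero =>
    intro d hd
    exact ⟨d, ⟨Or.inl (by omega), Or.inl (by omega), Or.inl (by omega)⟩, rfl, rfl, rfl,
      by simp⟩
  | succ N ih =>
    intro d hd
    by_cases h04 : 1 ≤ d 0 ∧ 1 ≤ d 4
    · obtain ⟨d₂, hdiff, happ⟩ := move_exps d 0 4 1 5 (by decide) h04.1 h04.2
      have a0 := happ 0; have a1 := happ 1; have a2 := happ 2; have a3 := happ 3
      have a4 := happ 4; have a5 := happ 5; have a6 := happ 6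
      simp at a0 a1 a2 a3 a4 a5 a6
      have hmeas : 2 * d₂ 0 + d₂ 1 ≤ N := by omega
      obtain ⟨d', hN', hEB', hEp', hEm', hmem'⟩ := ih d₂ hmeas
      refine ⟨d', hN', ?_, ?_, ?_, ?_⟩
      · rw [hEB']
        have n0 : d₂ 0 + d₂ 3 + d₂ 5 = d 0 + d 3 + d 5 := by omega
        have n1 : d₂ 1 + d₂ 4 = d 1 + d 4 := by omega
        have n2 : d₂ 2 + 2 * d₂ 3 + d₂ 6 = d 2 + 2 * d 3 + d 6 := by omega
        simp only [EB]; rw [n0, n1, n2]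
      · simp only [Ep] at hEp' ⊢; omega
      · simp only [Em] at hEm' ⊢; omega
      · have hstep : (MvPolynomial.monomial d (1:ℚ) - MvPolynomial.monomial d₂ 1) ∈ P0 := by
          rw [hdiff]; exact Ideal.mul_mem_left _ _ f1_mem
        have := add_mem hstep hmem'
        simpa using this
    · by_cases h06 : 1 ≤ d 0 ∧ 1 ≤ d 6
      · obtain ⟨d₂, hdiff, happ⟩ := move_exps d 0 6 2 5 (by decide) h06.1 h06.2
        have a0 := happ 0; have a1 := happ 1; have a2 := happ 2; have a3 := happ 3
        have a4 := happ 4; have a5 := happ 5; have a6 := happ 6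
        simp at a0 a1 a2 a3 a4 a5 a6
        have hmeas : 2 * d₂ 0 + d₂ 1 ≤ N := by omega
        obtain ⟨d', hN', hEB', hEp', hEm', hmem'⟩ := ih d₂ hmeas
        refine ⟨d', hN', ?_, ?_, ?_, ?_⟩
        · rw [hEB']
          have n0 : d₂ 0 + d₂ 3 + d₂ 5 = d 0 + d 3 + d 5 := by omega
          have n1 : d₂ 1 + d₂ 4 = d 1 + d 4 := by omega
          have n2 : d₂ 2 + 2 * d₂ 3 + d₂ 6 = d 2 + 2 * d 3 + d 6 := by omega
          simp only [EB]; rw [n0, n1, n2]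
        · simp only [Ep] at hEp' ⊢; omega
        · simp only [Em] at hEm' ⊢; omega
        · have hstep : (MvPolynomial.monomial d (1:ℚ) - MvPolynomial.monomial d₂ 1) ∈ P0 := by
            rw [hdiff]; exact Ideal.mul_mem_left _ _ f2_mem
          have := add_mem hstep hmem'
          simpa using this
      · by_cases h16 : 1 ≤ d 1 ∧ 1 ≤ d 6
        · obtain ⟨d₂, hdiff, happ⟩ := move_exps d 1 6 2 4 (by decide) h16.1 h16.2
          have a0 := happ 0; have a1 := happ 1; have a2 := happ 2; have a3 := happ 3
          have a4 := happ 4; have a5 := happ 5; have a6 := happ 6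
          simp at a0 a1 a2 a3 a4 a5 a6
          have hmeas : 2 * d₂ 0 + d₂ 1 ≤ N := by omega
          obtain ⟨d', hN', hEB', hEp', hEm', hmem'⟩ := ih d₂ hmeas
          refine ⟨d', hN', ?_, ?_, ?_, ?_⟩
          · rw [hEB']
            have n0 : d₂ 0 + d₂ 3 + d₂ 5 = d 0 + d 3 + d 5 := by omega
            have n1 : d₂ 1 + d₂ 4 = d 1 + d 4 := by omega
            have n2 : d₂ 2 + 2 * d₂ 3 + d₂ 6 = d 2 + 2 * d 3 + d 6 := by omega
            simp only [EB]; rw [n0, n1, n2]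
          · simp only [Ep] at hEp' ⊢; omega
          · simp only [Em] at hEm' ⊢; omega
          · have hstep : (MvPolynomial.monomial d (1:ℚ)
                - MvPolynomial.monomial d₂ 1) ∈ P0 := by
              rw [hdiff]; exact Ideal.mul_mem_left _ _ f3_mem
            have := add_mem hstep hmem'
            simpa using this
        · exact ⟨d, ⟨by omega, by omega, by omega⟩, rfl, rfl, rfl, by simp⟩

lemma normalizeExp (d : Fin 7 →₀ ℕ) :
    ∃ d', Nml d' ∧ EB d' = EB d ∧ Ep d' = Ep d ∧ Em d' = Em d ∧
      (MvPolynomial.monomial d (1 : ℚ) - MvPolynomial.monomial d' 1) ∈ P0 :=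
  normalize_aux (2 * d 0 + d 1) d le_rfl


lemma psi_f1 : Psi f1 = 0 := by
  rw [f1, map_sub, map_mul, map_mul, Psi_X0, Psi_X4, Psi_X1, Psi_X5]; ring

lemma psi_f2 : Psi f2 = 0 := by
  rw [f2, map_sub, map_mul, map_mul, Psi_X0, Psi_X6, Psi_X2, Psi_X5]; ring

lemma psi_f3 : Psi f3 = 0 := by
  rw [f3, map_sub, map_mul, map_mul, Psi_X1, Psi_X6, Psi_X2, Psi_X4]; ring

lemma psi_zero_of_P0 {g : S7} (hg : g ∈ P0) : Psi g = 0 := by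
  induction hg using Submodule.span_induction with
  | mem w hw =>
    rcases hw with h | h | h
    · rw [h, psi_f1]
    · rw [h, psi_f2]
    · simp only [Set.mem_singleton_iff] at h
      rw [h, psi_f3]
  | zero => simp
  | add u v _ _ hu hv => rw [map_add, hu, hv, add_zero]
  | smul r u _ hu => rw [smul_eq_mul, map_mul, hu, mul_zero]

lemma ker_psi {F : S7} (hF : Psi F = 0) : F ∈ P0 := by
  classical
  choose nf hN hEB hEp hEm hmem using normalizeExp
  set G : S7 := ∑ d ∈ F.support,
    MvPolynomial.monomial (nf d) (MvPolynomial.coeff d F) with hG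
  have hFrep : F = ∑ d ∈ F.support, MvPolynomial.monomial d (MvPolynomial.coeff d F) :=
    (MvPolynomial.support_sum_monomial_coeff F).symm
  have hFG : F - G ∈ P0 := by
    have hrepr : F - G = ∑ d ∈ F.support,
        MvPolynomial.C (MvPolynomial.coeff d F) *
          (MvPolynomial.monomial d 1 - MvPolynomial.monomial (nf d) 1) := by
      conv_lhs => rw [hFrep, hG]
      rw [← Finset.sum_sub_distrib]
      apply Finset.sum_congr rfl
      intro d _
      simp [mul_sub, MvPolynomial.C_mul_monomial]
    rw [hrepr]
    exact Submodule.sum_mem _ (fun d _ => Ideal.mul_mem_left _ _ (hmem d))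
  have hPsiG : Psi G = 0 := by
    have h1 : Psi (F - G) = 0 := psi_zero_of_P0 hFG
    rw [map_sub, hF] at h1
    simpa using h1
  have hcoeffG : ∀ d₀, MvPolynomial.coeff d₀ G =
      ∑ d ∈ F.support, (if nf d = d₀ then MvPolynomial.coeff d F else 0) := by
    intro d₀
    rw [hG, MvPolynomial.coeff_sum]
    exact Finset.sum_congr rfl (fun d _ => MvPolynomial.coeff_monomial _ _ _)
  have hPsiCoeff : ∀ d₀,
      MvPolynomial.coeff (EB d₀) (((Psi G).coeff (Em d₀)).coeff (Ep d₀)) =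
      ∑ d ∈ F.support,
        (if Em (nf d) = Em d₀ ∧ Ep (nf d) = Ep d₀ ∧ EB (nf d) = EB d₀
          then MvPolynomial.coeff d F else 0) := by
    intro d₀
    rw [hG, map_sum]
    simp only [psi_monomial]
    rw [Polynomial.finset_sum_coeff, Polynomial.finset_sum_coeff, MvPolynomial.coeff_sum]
    apply Finset.sum_congr rfl
    intro d _
    by_cases h₁ : Em (nf d) = Em d₀ <;> by_cases h₂ : Ep (nf d) = Ep d₀ <;>
      by_cases h₃ : EB (nf d) = EB d₀ <;>
      simp [Polynomial.coeff_monomial, MvPolynomial.coeff_monomial, h₁, h₂, h₃]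
  have key : ∀ d₀, MvPolynomial.coeff d₀ G = 0 := by
    intro d₀
    by_cases hn : Nml d₀
    · have hh := hPsiCoeff d₀
      rw [hPsiG] at hh
      simp only [Polynomial.coeff_zero, MvPolynomial.coeff_zero] at hh
      rw [hcoeffG]
      have heq : (∑ d ∈ F.support, if nf d = d₀ then MvPolynomial.coeff d F else 0) =
          ∑ d ∈ F.support,
            (if Em (nf d) = Em d₀ ∧ Ep (nf d) = Ep d₀ ∧ EB (nf d) = EB d₀
              then MvPolynomial.coeff d F else 0) := by
        apply Finset.sum_congr rfl
        intro d _
        apply if_congr _ rfl rfl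
        constructor
        · intro h; rw [h]; exact ⟨rfl, rfl, rfl⟩
        · rintro ⟨h₁, h₂, h₃⟩
          exact E_inj (hN d) hn h₃ h₂ h₁
      rw [heq, ← hh]
    · rw [hcoeffG]
      apply Finset.sum_eq_zero
      intro d _
      rw [if_neg]
      intro hEq
      exact hn (hEq ▸ hN d)
  have hGzero : G = 0 := by
    apply MvPolynomial.ext
    intro d₀
    rw [key d₀, MvPolynomial.coeff_zero]
  simpa [hGzero] using hFG


/-! ### the remaining generators -/

def g4 : S7 := MvPolynomial.X 0 * MvPolynomial.X 2 * MvPolynomial.X 6 -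
  MvPolynomial.X 1 * (MvPolynomial.X 0 + MvPolynomial.X 2) * MvPolynomial.X 3
def g5 : S7 := MvPolynomial.X 1 * MvPolynomial.X 3 * (MvPolynomial.X 5 + MvPolynomial.X 6) -
  MvPolynomial.X 0 * MvPolynomial.X 6 ^ 2
def g6 : S7 := MvPolynomial.X 3 * MvPolynomial.X 4 * (MvPolynomial.X 5 + MvPolynomial.X 6) -
  MvPolynomial.X 5 * MvPolynomial.X 6 ^ 2

/-- the value substituted for the outer variable -/
def rr : PB := Polynomial.C bd * Polynomial.X

lemma psi_g4 : Psi g4 = CQ (va * vc ^ 2) * (Polynomial.X - Polynomial.C rr) := by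
  rw [g4]
  simp only [map_sub, map_mul, map_add, Psi_X0, Psi_X1, Psi_X2, Psi_X3, Psi_X6]
  simp only [CQ, rr, bd, map_mul, map_add, map_pow]
  ring

lemma psi_g5 : Psi g5 =
    -(CQ (va * vc ^ 2) * Polynomial.X * (Polynomial.X - Polynomial.C rr)) := by
  rw [g5]
  simp only [map_sub, map_mul, map_add, map_pow, Psi_X0, Psi_X1, Psi_X3, Psi_X5, Psi_X6]
  simp only [CQ, rr, bd, map_mul, map_add, map_pow]
  ring

lemma psi_g6 : Psi g6 =
    -(CQ (va * vc ^ 2) * Polynomial.X ^ 2 * (Polynomial.X - Polynomial.C rr)) := by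
  rw [g6]
  simp only [map_sub, map_mul, map_add, map_pow, Psi_X3, Psi_X4, Psi_X5, Psi_X6]
  simp only [CQ, rr, bd, map_mul, map_add, map_pow]
  ring

/-! ### injectivity of `evU` -/

def kappa : R4 →ₐ[ℚ] PB :=
  MvPolynomial.aeval ![Polynomial.C va, Polynomial.C vb, Polynomial.C vc, Polynomial.X]

lemma evU_inj {s : PB} (hs : evU s = 0) : s = 0 := by
  have hcomp : ((kappa : R4 →+* PB).comp (evU : PB →+* R4)) = RingHom.id PB := by
    apply Polynomial.ringHom_ext
    · intro w
      have h1 : evU (Polynomial.C w) = evB w := by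
        simp [evU, Polynomial.aevalTower_C]
      have h2 : ((kappa : R4 →+* PB)).comp (evB : B3 →+* R4) =
          (Polynomial.C : B3 →+* PB) := by
        apply MvPolynomial.ringHom_ext
        · intro q
          simp [kappa, evB, MvPolynomial.algebraMap_eq]
        · intro i
          fin_cases i <;> simp [kappa, evB, va, vb, vc]
      simp only [RingHom.comp_apply, RingHom.coe_coe, h1]
      exact congrArg (fun g => g w) h2
    · simp [evU, kappa, Polynomial.aevalTower_X]
  have := congrArg (fun g => g s) hcomp
  simp only [RingHom.comp_apply, RingHom.coe_coe, RingHom.id_apply] at this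
  rw [hs] at this
  simpa using this.symm

lemma evU_rr : evU rr =
    MvPolynomial.X 1 * (MvPolynomial.X 0 + MvPolynomial.X 2) * MvPolynomial.X 3 := by
  simp [rr, evU, Polynomial.aevalTower_C, Polynomial.aevalTower_X, bd, evB, va, vb, vc]

lemma evV_eval (q : PPB) : evV q = evU (q.eval rr) := by
  have h : (evV : PPB →+* R4) =
      ((evU : PB →+* R4).comp (Polynomial.evalRingHom rr)) := by
    apply Polynomial.ringHom_ext
    · intro w
      simp [evV, Polynomial.aevalTower_C, evU]
    · simp [evV, Polynomial.aevalTower_X, evU_rr]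
  exact congrArg (fun g => g q) h

/-- decomposable elements of `PPB` -/
def Good (w : PPB) : Prop := ∃ F1 F2 F3 : S7,
  w = CQ (va * vc ^ 2) * (Psi F1 + Polynomial.X * Psi F2 + Polynomial.X ^ 2 * Psi F3)

lemma good_zero : Good 0 := ⟨0, 0, 0, by simp⟩

lemma good_add {w₁ w₂ : PPB} (h₁ : Good w₁) (h₂ : Good w₂) : Good (w₁ + w₂) := by
  obtain ⟨a₁, a₂, a₃, rfl⟩ := h₁
  obtain ⟨b₁, b₂, b₃, rfl⟩ := h₂
  exact ⟨a₁ + b₁, a₂ + b₂, a₃ + b₃, by rw [map_add, map_add, map_add]; ring⟩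

/-! ### the main theorem, hard inclusion -/

def JJ : Ideal S7 := Ideal.span {f1, f2, f3, g4, g5, g6}

lemma f1_memJ : f1 ∈ JJ := Ideal.subset_span (by simp [JJ])
lemma f2_memJ : f2 ∈ JJ := Ideal.subset_span (by simp [JJ])
lemma f3_memJ : f3 ∈ JJ := Ideal.subset_span (by simp [JJ])
lemma g4_memJ : g4 ∈ JJ := Ideal.subset_span (by simp [JJ])
lemma g5_memJ : g5 ∈ JJ := Ideal.subset_span (by simp [JJ])
lemma g6_memJ : g6 ∈ JJ := Ideal.subset_span (by simp [JJ])

lemma P0_le_JJ : P0 ≤ JJ := by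
  rw [P0, Ideal.span_le]
  rintro w hw
  rcases hw with h | h | h
  · rw [h]; exact f1_memJ
  · rw [h]; exact f2_memJ
  · simp only [Set.mem_singleton_iff] at h
    rw [h]; exact f3_memJ

set_option maxHeartbeats 4000000 in
lemma ker_phi_le : ∀ F : S7, phi F = 0 → F ∈ JJ := by
  intro F hF
  -- `Psi F` is divisible by `X - C rr`
  have hev : evU ((Psi F).eval rr) = 0 := by
    rw [← evV_eval, ← phi_eq, hF]
  have hs0 : (Psi F).eval rr = 0 := evU_inj hev
  have hdvd : Polynomial.X - Polynomial.C rr ∣ Psi F := by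
    have h := @Polynomial.X_sub_C_dvd_sub_C_eval PB rr _ (Psi F)
    rwa [hs0, map_zero, sub_zero] at h
  obtain ⟨h, hq⟩ := hdvd
  -- the coefficient conditions
  set H : ℕ → ℕ → B3 := fun p m => ((h.coeff m).coeff p) with hH
  have hcond : ∀ p m : ℕ, (if 1 ≤ m then H p (m - 1) else 0)
      - bd * (if 1 ≤ p then H (p - 1) m else 0) ∈ Pd ^ p * mB ^ m := by
    intro p m
    have hmem := psi_coeff_mem F p m
    rw [hq] at hmem
    have e1 : (Polynomial.X - Polynomial.C rr) * h =
        Polynomial.X * h - Polynomial.C rr * h := by ring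
    rw [e1, Polynomial.coeff_sub, Polynomial.coeff_sub] at hmem
    have e2 : ((Polynomial.X * h).coeff m) = if 1 ≤ m then h.coeff (m - 1) else 0 := by
      match m with
      | 0 => simp [Polynomial.mul_coeff_zero]
      | (m+1) => simp [Polynomial.coeff_X_mul]
    have e3 : ((Polynomial.C rr * h).coeff m) = rr * h.coeff m := Polynomial.coeff_C_mul h
    rw [e2, e3] at hmem
    have e4 : (rr * h.coeff m).coeff p = bd * (if 1 ≤ p then H (p - 1) m else 0) := by
      rw [rr]
      have : Polynomial.C bd * Polynomial.X * h.coeff m =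
          Polynomial.C bd * (Polynomial.X * h.coeff m) := by ring
      rw [this, Polynomial.coeff_C_mul]
      match p with
      | 0 => simp [Polynomial.mul_coeff_zero]
      | (p+1) => simp [Polynomial.coeff_X_mul, hH]
    rw [e4] at hmem
    have e5 : ((if 1 ≤ m then h.coeff (m - 1) else 0).coeff p) =
        if 1 ≤ m then H p (m - 1) else 0 := by
      split_ifs <;> simp [hH]
    rwa [e5] at hmem
  have hHmem := main_ind H hcond
  -- decompose `h`
  have hgood : Good h := by
    have hpiece : ∀ (p m : ℕ),
        Good (CQ (H p m) * (Polynomial.C Polynomial.X) ^ p * Polynomial.X ^ m) := by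
      intro p m
      have hm := hHmem m p
      have hsplit : Pd ^ (p + 1) * mB ^ (m - 2) = Pd * (Pd ^ p * mB ^ (m - 2)) := by
        rw [← mul_assoc, ← pow_succ']
      rw [hsplit, Pd, Ideal.mem_span_singleton_mul] at hm
      obtain ⟨w₂, hw₂, hw₂eq⟩ := hm
      obtain ⟨s, hsPsi⟩ := preimage_PdmB p (m - 2) w₂ hw₂
      match m with
      | 0 =>
        refine ⟨s, 0, 0, ?_⟩
        simp only [map_zero, mul_zero, add_zero, zero_add]
        rw [hsPsi, ← hw₂eq, CQ_mul]
        simp only [show (0:ℕ) - 2 = 0 from rfl, pow_zero, mul_one]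
        ring
      | 1 =>
        refine ⟨0, s, 0, ?_⟩
        simp only [map_zero, mul_zero, add_zero, zero_add]
        rw [hsPsi, ← hw₂eq, CQ_mul]
        simp only [show (1:ℕ) - 2 = 0 from rfl, pow_zero, mul_one, pow_one]
        ring
      | (n+2) =>
        refine ⟨0, 0, s, ?_⟩
        simp only [map_zero, mul_zero, add_zero, zero_add]
        rw [hsPsi, ← hw₂eq, CQ_mul]
        simp only [show n + 2 - 2 = n from by omega]
        ring
    -- `h` as a double sum of such pieces
    have hrep : h = ∑ m ∈ h.support, ∑ p ∈ (h.coeff m).support,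
        CQ (H p m) * (Polynomial.C Polynomial.X) ^ p * Polynomial.X ^ m := by
      conv_lhs => rw [← Polynomial.sum_C_mul_X_pow_eq h]
      rw [Polynomial.sum_def]
      apply Finset.sum_congr rfl
      intro m _
      have hin : (h.coeff m) = (h.coeff m).sum fun p w => Polynomial.C w * Polynomial.X ^ p :=
        (Polynomial.sum_C_mul_X_pow_eq _).symm
      conv_lhs => rw [hin, Polynomial.sum_def]
      rw [map_sum, Finset.sum_mul]
      apply Finset.sum_congr rfl
      intro p _
      rw [map_mul, map_pow]
      rfl
    rw [hrep]
    apply Finset.sum_induction _ Good (fun _ _ => good_add) good_zero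
    intro m _
    apply Finset.sum_induction _ Good (fun _ _ => good_add) good_zero
    intro p _
    exact hpiece p m
  obtain ⟨F1, F2, F3, hhdec⟩ := hgood
  have hfinal : Psi (F - (g4 * F1 - g5 * F2 - g6 * F3)) = 0 := by
    rw [map_sub, hq, map_sub, map_sub, map_mul, map_mul, map_mul,
      psi_g4, psi_g5, psi_g6, hhdec]
    ring
  have hker := ker_psi hfinal
  have : F = (F - (g4 * F1 - g5 * F2 - g6 * F3)) + (g4 * F1 - g5 * F2 - g6 * F3) := by
    ring
  rw [this]
  refine add_mem (P0_le_JJ hker) ?_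
  refine sub_mem (sub_mem ?_ ?_) ?_
  · exact Ideal.mul_mem_right _ _ g4_memJ
  · exact Ideal.mul_mem_right _ _ g5_memJ
  · exact Ideal.mul_mem_right _ _ g6_memJ


/-! ### easy inclusion and part 1 -/

lemma JJ_le_ker : JJ ≤ RingHom.ker (phi : S7 →ₐ[ℚ] R4) := by
  rw [JJ, Ideal.span_le]
  rintro w hw
  simp only [Set.mem_insert_iff, Set.mem_singleton_iff] at hw
  rw [SetLike.mem_coe, RingHom.mem_ker]
  rcases hw with h | h | h | h | h | h <;> rw [h] <;>
    · simp only [f1, f2, f3, g4, g5, g6, map_sub, map_mul, map_add, map_pow, phi,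
        MvPolynomial.aeval_X, Matrix.cons_val_zero, Matrix.cons_val_one, Matrix.head_cons,
        Matrix.cons_val_two, Matrix.tail_cons, Matrix.cons_val_three, Matrix.cons_val_four,
        vec7_5, vec7_6]
      ring

lemma part1 : RingHom.ker (phi : S7 →ₐ[ℚ] R4) = JJ := by
  refine le_antisymm ?_ JJ_le_ker
  intro F hF
  exact ker_phi_le F (by rwa [RingHom.mem_ker] at hF)

/-! ### the colon ideal -/

def P1 : Ideal S7 := Ideal.span {f1, f2, f3, g4}
def mS : Ideal S7 := Ideal.span {MvPolynomial.X 0, MvPolynomial.X 1, MvPolynomial.X 2}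

lemma mem_P1_comb (c1 c2 c3 c4 w : S7) (h : w = c1 * f1 + c2 * f2 + c3 * f3 + c4 * g4) :
    w ∈ P1 := by
  have h1 : f1 ∈ P1 := Ideal.subset_span (by simp [P1])
  have h2 : f2 ∈ P1 := Ideal.subset_span (by simp [P1])
  have h3 : f3 ∈ P1 := Ideal.subset_span (by simp [P1])
  have h4 : g4 ∈ P1 := Ideal.subset_span (by simp [P1])
  rw [h]
  exact add_mem (add_mem (add_mem (Ideal.mul_mem_left _ _ h1) (Ideal.mul_mem_left _ _ h2))
    (Ideal.mul_mem_left _ _ h3)) (Ideal.mul_mem_left _ _ h4)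

lemma colon_gen (gg : S7)
    (hcert : ∀ u v : S7, u ∈ ({MvPolynomial.X 0, MvPolynomial.X 1, MvPolynomial.X 2} : Set S7) →
      v ∈ ({MvPolynomial.X 0, MvPolynomial.X 1, MvPolynomial.X 2} : Set S7) →
      gg * (u * v) ∈ P1) :
    gg ∈ Submodule.colon P1 ((mS ^ 2 : Ideal S7) : Set S7) := by
  rw [Submodule.mem_colon]
  intro pp hpp
  rw [smul_eq_mul]
  rw [SetLike.mem_coe, pow_two, mS] at hpp
  refine Submodule.mul_induction_on hpp ?_ ?_
  · intro u hu v hv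
    induction hu using Submodule.span_induction with
    | mem u₀ hu₀ =>
      induction hv using Submodule.span_induction with
      | mem v₀ hv₀ => exact hcert u₀ v₀ hu₀ hv₀
      | zero => rw [mul_zero, mul_zero]; exact zero_mem _
      | add v₁ v₂ _ _ hv₁ hv₂ =>
        have : gg * (u₀ * (v₁ + v₂)) = gg * (u₀ * v₁) + gg * (u₀ * v₂) := by ring
        rw [this]; exact add_mem hv₁ hv₂
      | smul r v₁ _ hv₁ =>
        have : gg * (u₀ * (r • v₁)) = r * (gg * (u₀ * v₁)) := by
          rw [smul_eq_mul]; ring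
        rw [this]; exact Ideal.mul_mem_left _ _ hv₁
    | zero => rw [zero_mul, mul_zero]; exact zero_mem _
    | add u₁ u₂ _ _ hu₁ hu₂ =>
      have : gg * ((u₁ + u₂) * v) = gg * (u₁ * v) + gg * (u₂ * v) := by ring
      rw [this]; exact add_mem hu₁ hu₂
    | smul r u₁ _ hu₁ =>
      have : gg * ((r • u₁) * v) = r * (gg * (u₁ * v)) := by
        rw [smul_eq_mul]; ring
      rw [this]; exact Ideal.mul_mem_left _ _ hu₁
  · intro p q hp hq
    rw [mul_add]
    exact add_mem hp hq

lemma g5_colon : g5 ∈ Submodule.colon P1 ((mS ^ 2 : Ideal S7) : Set S7) := by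
  apply colon_gen
  intro u v hu hv
  simp only [Set.mem_insert_iff, Set.mem_singleton_iff] at hu hv
  rcases hu with hu | hu | hu <;> rcases hv with hv | hv | hv
  · exact mem_P1_comb (0) (MvPolynomial.X 0*MvPolynomial.X 1*MvPolynomial.X 3 - MvPolynomial.X 0^2*MvPolynomial.X 6) (0) (-(MvPolynomial.X 0*MvPolynomial.X 5)) _
      (by rw [hu, hv]; simp only [f1, f2, f3, g4, g5]; ring)
  · exact mem_P1_comb (0) (MvPolynomial.X 1^2*MvPolynomial.X 3 - MvPolynomial.X 0*MvPolynomial.X 1*MvPolynomial.X 6) (0) (-(MvPolynomial.X 1*MvPolynomial.X 5)) _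
      (by rw [hu, hv]; simp only [f1, f2, f3, g4, g5]; ring)
  · exact mem_P1_comb (0) (-(MvPolynomial.X 0*MvPolynomial.X 1*MvPolynomial.X 3)) (0) (-(MvPolynomial.X 0*MvPolynomial.X 6)) _
      (by rw [hu, hv]; simp only [f1, f2, f3, g4, g5]; ring)
  · exact mem_P1_comb (0) (MvPolynomial.X 1^2*MvPolynomial.X 3 - MvPolynomial.X 0*MvPolynomial.X 1*MvPolynomial.X 6) (0) (-(MvPolynomial.X 1*MvPolynomial.X 5)) _
      (by rw [hu, hv]; simp only [f1, f2, f3, g4, g5]; ring)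
  · exact mem_P1_comb (MvPolynomial.X 1*MvPolynomial.X 2*MvPolynomial.X 6 - MvPolynomial.X 1^2*MvPolynomial.X 3) (-(MvPolynomial.X 1^2*MvPolynomial.X 6)) (MvPolynomial.X 1^2*MvPolynomial.X 3) (-(MvPolynomial.X 1*MvPolynomial.X 4)) _
      (by rw [hu, hv]; simp only [f1, f2, f3, g4, g5]; ring)
  · exact mem_P1_comb (0) (-(MvPolynomial.X 1^2*MvPolynomial.X 3)) (0) (-(MvPolynomial.X 1*MvPolynomial.X 6)) _
      (by rw [hu, hv]; simp only [f1, f2, f3, g4, g5]; ring)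
  · exact mem_P1_comb (0) (-(MvPolynomial.X 0*MvPolynomial.X 1*MvPolynomial.X 3)) (0) (-(MvPolynomial.X 0*MvPolynomial.X 6)) _
      (by rw [hu, hv]; simp only [f1, f2, f3, g4, g5]; ring)
  · exact mem_P1_comb (0) (-(MvPolynomial.X 1^2*MvPolynomial.X 3)) (0) (-(MvPolynomial.X 1*MvPolynomial.X 6)) _
      (by rw [hu, hv]; simp only [f1, f2, f3, g4, g5]; ring)
  · exact mem_P1_comb (0) (-(MvPolynomial.X 1*MvPolynomial.X 2*MvPolynomial.X 3)) (0) (-(MvPolynomial.X 2*MvPolynomial.X 6)) _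
      (by rw [hu, hv]; simp only [f1, f2, f3, g4, g5]; ring)

lemma g6_colon : g6 ∈ Submodule.colon P1 ((mS ^ 2 : Ideal S7) : Set S7) := by
  apply colon_gen
  intro u v hu hv
  simp only [Set.mem_insert_iff, Set.mem_singleton_iff] at hu hv
  rcases hu with hu | hu | hu <;> rcases hv with hv | hv | hv
  · exact mem_P1_comb (MvPolynomial.X 0*MvPolynomial.X 3*MvPolynomial.X 5 + MvPolynomial.X 0*MvPolynomial.X 3*MvPolynomial.X 6) (MvPolynomial.X 1*MvPolynomial.X 3*MvPolynomial.X 5 - MvPolynomial.X 0*MvPolynomial.X 5*MvPolynomial.X 6) (0) (-(MvPolynomial.X 5^2)) _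
      (by rw [hu, hv]; simp only [f1, f2, f3, g4, g6]; ring)
  · exact mem_P1_comb (MvPolynomial.X 1*MvPolynomial.X 3*MvPolynomial.X 6 + MvPolynomial.X 2*MvPolynomial.X 5*MvPolynomial.X 6) (-(MvPolynomial.X 1*MvPolynomial.X 5*MvPolynomial.X 6)) (MvPolynomial.X 1*MvPolynomial.X 3*MvPolynomial.X 5) (-(MvPolynomial.X 4*MvPolynomial.X 5)) _
      (by rw [hu, hv]; simp only [f1, f2, f3, g4, g6]; ring)
  · exact mem_P1_comb (MvPolynomial.X 2*MvPolynomial.X 3*MvPolynomial.X 5 + MvPolynomial.X 2*MvPolynomial.X 3*MvPolynomial.X 6) (-(MvPolynomial.X 1*MvPolynomial.X 3*MvPolynomial.X 5)) (0) (-(MvPolynomial.X 5*MvPolynomial.X 6)) _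
      (by rw [hu, hv]; simp only [f1, f2, f3, g4, g6]; ring)
  · exact mem_P1_comb (MvPolynomial.X 1*MvPolynomial.X 3*MvPolynomial.X 6 + MvPolynomial.X 2*MvPolynomial.X 5*MvPolynomial.X 6) (-(MvPolynomial.X 1*MvPolynomial.X 5*MvPolynomial.X 6)) (MvPolynomial.X 1*MvPolynomial.X 3*MvPolynomial.X 5) (-(MvPolynomial.X 4*MvPolynomial.X 5)) _
      (by rw [hu, hv]; simp only [f1, f2, f3, g4, g6]; ring)
  · exact mem_P1_comb (MvPolynomial.X 1*MvPolynomial.X 6^2 + MvPolynomial.X 2*MvPolynomial.X 4*MvPolynomial.X 6 - MvPolynomial.X 1*MvPolynomial.X 3*MvPolynomial.X 4) (-(MvPolynomial.X 1*MvPolynomial.X 4*MvPolynomial.X 6)) (MvPolynomial.X 1*MvPolynomial.X 3*MvPolynomial.X 4) (-(MvPolynomial.X 4^2)) _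
      (by rw [hu, hv]; simp only [f1, f2, f3, g4, g6]; ring)
  · exact mem_P1_comb (MvPolynomial.X 2*MvPolynomial.X 6^2) (-(MvPolynomial.X 1*MvPolynomial.X 3*MvPolynomial.X 4)) (0) (-(MvPolynomial.X 4*MvPolynomial.X 6)) _
      (by rw [hu, hv]; simp only [f1, f2, f3, g4, g6]; ring)
  · exact mem_P1_comb (MvPolynomial.X 2*MvPolynomial.X 3*MvPolynomial.X 5 + MvPolynomial.X 2*MvPolynomial.X 3*MvPolynomial.X 6) (-(MvPolynomial.X 1*MvPolynomial.X 3*MvPolynomial.X 5)) (0) (-(MvPolynomial.X 5*MvPolynomial.X 6)) _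
      (by rw [hu, hv]; simp only [f1, f2, f3, g4, g6]; ring)
  · exact mem_P1_comb (MvPolynomial.X 2*MvPolynomial.X 6^2) (-(MvPolynomial.X 1*MvPolynomial.X 3*MvPolynomial.X 4)) (0) (-(MvPolynomial.X 4*MvPolynomial.X 6)) _
      (by rw [hu, hv]; simp only [f1, f2, f3, g4, g6]; ring)
  · exact mem_P1_comb (MvPolynomial.X 2*MvPolynomial.X 3*MvPolynomial.X 6) (-(MvPolynomial.X 1*MvPolynomial.X 3*MvPolynomial.X 6) - MvPolynomial.X 2*MvPolynomial.X 3*MvPolynomial.X 4 + MvPolynomial.X 2*MvPolynomial.X 6^2) (-(MvPolynomial.X 2*MvPolynomial.X 3*MvPolynomial.X 6)) (-(MvPolynomial.X 6^2)) _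
      (by rw [hu, hv]; simp only [f1, f2, f3, g4, g6]; ring)

lemma mem_colon_of_mem_P1 {w : S7} (hw : w ∈ P1) : w ∈ Submodule.colon P1 ((mS ^ 2 : Ideal S7) : Set S7) := by
  rw [Submodule.mem_colon]
  intro pp _
  rw [smul_eq_mul, mul_comm]
  exact Ideal.mul_mem_left _ _ hw

lemma P1_le_JJ : P1 ≤ JJ := by
  rw [P1, Ideal.span_le]
  rintro w hw
  rcases hw with h | h | h | h
  · rw [h]; exact f1_memJ
  · rw [h]; exact f2_memJ
  · rw [h]; exact f3_memJ
  · simp only [Set.mem_singleton_iff] at h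
    rw [h]; exact g4_memJ

lemma part2 : RingHom.ker (phi : S7 →ₐ[ℚ] R4) = Submodule.colon P1 ((mS ^ 2 : Ideal S7) : Set S7) := by
  refine le_antisymm ?_ ?_
  · rw [part1, JJ, Ideal.span_le]
    rintro w hw
    simp only [Set.mem_insert_iff, Set.mem_singleton_iff] at hw
    rw [SetLike.mem_coe]
    rcases hw with h | h | h | h | h | h
    · exact h ▸ mem_colon_of_mem_P1 (Ideal.subset_span (by simp [P1]))
    · exact h ▸ mem_colon_of_mem_P1 (Ideal.subset_span (by simp [P1]))
    · exact h ▸ mem_colon_of_mem_P1 (Ideal.subset_span (by simp [P1]))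
    · exact h ▸ mem_colon_of_mem_P1 (Ideal.subset_span (by simp [P1]))
    · exact h ▸ g5_colon
    · exact h ▸ g6_colon
  · intro r hr
    have ha : MvPolynomial.X 0 * MvPolynomial.X 0 ∈ mS ^ 2 := by
      rw [pow_two]
      exact Ideal.mul_mem_mul (Ideal.subset_span (by simp [mS]))
        (Ideal.subset_span (by simp [mS]))
    have hra : r * (MvPolynomial.X 0 * MvPolynomial.X 0) ∈ P1 := by
      have := Submodule.mem_colon.mp hr _ ha
      rwa [smul_eq_mul] at this
    have hker : r * (MvPolynomial.X 0 * MvPolynomial.X 0) ∈ RingHom.ker (phi : S7 →ₐ[ℚ] R4) := by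
      rw [part1]
      exact P1_le_JJ hra
    rw [RingHom.mem_ker, map_mul, map_mul] at hker
    rw [RingHom.mem_ker]
    rcases mul_eq_zero.mp hker with h | h
    · exact h
    · exfalso
      have : (phi (MvPolynomial.X 0) : R4) = MvPolynomial.X 0 := by
        simp [phi]
      rw [this] at h
      exact mul_ne_zero (MvPolynomial.X_ne_zero _) (MvPolynomial.X_ne_zero _) h

end ReesAux


/-- Let `℘` be the kernel of `ℚ[a,b,c,x,y,z,t] → ℚ[a,b,c,u]` fixing `a, b, c` and sending
`x ↦ ac²u`, `y ↦ b²(a+c)u`, `z ↦ ab(a+c)u`, `t ↦ bc(a+c)u` (the defining ideal of the Rees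
algebra of `I = (ac², b²(a+c), ab(a+c), bc(a+c))`).  Then `℘` is generated by the listed
six polynomials, and `℘ = ℘₁ : (a,b,c)²`, where `℘₁` is the ideal of the linear
syzygies. -/
theorem rees_ideal_of_example :
    RingHom.ker (MvPolynomial.aeval
        (![A, B, CC, A * CC ^ 2 * U, B ^ 2 * (A + CC) * U, A * B * (A + CC) * U,
          B * CC * (A + CC) * U]) :
        MvPolynomial (Fin 7) ℚ →ₐ[ℚ] MvPolynomial (Fin 4) ℚ) =
      Ideal.span {a * y - b * z, a * t - c * z, b * t - c * y,
        a * c * t - b * (a + c) * x, b * x * (z + t) - a * t ^ 2,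
        x * y * (z + t) - z * t ^ 2} ∧
    RingHom.ker (MvPolynomial.aeval
        (![A, B, CC, A * CC ^ 2 * U, B ^ 2 * (A + CC) * U, A * B * (A + CC) * U,
          B * CC * (A + CC) * U]) :
        MvPolynomial (Fin 7) ℚ →ₐ[ℚ] MvPolynomial (Fin 4) ℚ) =
      Submodule.colon
        (Ideal.span {a * y - b * z, a * t - c * z, b * t - c * y,
          a * c * t - b * (a + c) * x})
        (((Ideal.span {a, b, c}) ^ 2 : Ideal (MvPolynomial (Fin 7) ℚ)) : Set (MvPolynomial (Fin 7) ℚ)) := by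
  exact ⟨part1, part2⟩
end

section
/- The kernel of the ℚ-algebra homomorphism ℚ[x,y,z,t] → ℚ[a,b,c] sending x ↦ ac², y ↦ b²(a+c), z ↦ ab(a+c), t ↦ bc(a+c) is the principal ideal generated by the irreducible polynomial xy(z+t) − zt²; i.e., the implicit equation of the closure of the image of the rational map ℙ² ⇢ ℙ³ given by (ac² : b²(a+c) : ab(a+c) : bc(a+c)) is H = xy(z+t) − zt². -/
open MvPolynomial

set_option maxHeartbeats 1000000
set_option synthInstance.maxHeartbeats 1000000

local notation "x" => (MvPolynomial.X 0 : MvPolynomial (Fin 4) ℚ)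
local notation "y" => (MvPolynomial.X 1 : MvPolynomial (Fin 4) ℚ)
local notation "z" => (MvPolynomial.X 2 : MvPolynomial (Fin 4) ℚ)
local notation "t" => (MvPolynomial.X 3 : MvPolynomial (Fin 4) ℚ)

local notation "a" => (MvPolynomial.X 0 : MvPolynomial (Fin 3) ℚ)
local notation "b" => (MvPolynomial.X 1 : MvPolynomial (Fin 3) ℚ)
local notation "c" => (MvPolynomial.X 2 : MvPolynomial (Fin 3) ℚ)

/-!
Write `ℚ[x,y,z,t] = ℚ[y,z,t][x]`. There `H = α x - β` with `α = y(z+t)` and `β = zt²`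
coprime, so `H` is primitive of degree one in `x`. The map sends `x ↦ ac²` and is injective
on `ℚ[y,z,t]`: after the substitutions `c ↦ c - a` in the target and `t ↦ t - z` in the source
it becomes the monomial map `(y, z, t) ↦ (b²c, abc, bc²)`, whose exponent matrix is
invertible. Pseudo-dividing a kernel element `p` by `H` gives `αⁿ p = qH + r` with
`r ∈ ℚ[y,z,t]` in the kernel, so `r = 0`; as `H` is primitive, `H ∣ αⁿ p` forces `H ∣ p`.
Irreducibility follows since the kernel of a map to a domain is prime.
-/

namespace Polynomial

variable {R : Type*} [CommRing R]

theorem exists_C_pow_mul_eq_mul_add_C (α β : R) (p : R[X]) :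
    ∃ (n : ℕ) (q : R[X]) (r : R), C α ^ n * p = q * (C α * X - C β) + C r := by
  induction p using Polynomial.recOnHorner with
  | M0 => exact ⟨0, 0, 0, by simp⟩
  | MC p s _ _ ih =>
    obtain ⟨n, q, r, hq⟩ := ih
    exact ⟨n, q, r + α ^ n * s, by rw [map_add, map_mul, map_pow]; linear_combination hq⟩
  | MX p _ ih =>
    obtain ⟨n, q, r, hq⟩ := ih
    refine ⟨n + 1, C α * q * X + C r, r * β, ?_⟩
    rw [map_mul]
    linear_combination C α * X * hq

theorem isPrimitive_C_mul_X_sub_C {α β : R} (h : IsRelPrime α β) :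
    (C α * X - C β).IsPrimitive := by
  refine isPrimitive_iff_isUnit_of_C_dvd.2 fun r hr => ?_
  rw [C_dvd_iff_dvd_coeff] at hr
  exact h (by simpa using hr 1) (by simpa using hr 0)

theorem IsPrimitive.isRelPrime_C [IsDomain R] {p : R[X]} (hp : p.IsPrimitive) {r : R}
    (hr : r ≠ 0) : IsRelPrime p (C r) := by
  intro d hdp hdr
  have hd : d = C (d.coeff 0) :=
    eq_C_of_natDegree_eq_zero (by simpa using natDegree_le_of_dvd hdr (C_ne_zero.2 hr))
  rw [hd] at hdp ⊢
  exact (hp _ hdp).map C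

theorem ker_eq_span_C_mul_X_sub_C [IsDomain R] [UniqueFactorizationMonoid R] {S : Type*}
    [CommRing S] (ψ : R[X] →+* S) (hψ : Function.Injective (ψ.comp C)) {α β : R}
    (hαβ : IsRelPrime α β) (hψh : ψ (C α * X - C β) = 0) :
    RingHom.ker ψ = Ideal.span {C α * X - C β} := by
  refine le_antisymm (fun p hp => Ideal.mem_span_singleton.2 ?_)
    (Ideal.span_le.2 (Set.singleton_subset_iff.2 hψh))
  have hα : α ≠ 0 := by
    rintro rfl
    have hβ : β = 0 := hψ (by simpa using hψh)
    exact not_isUnit_zero (isRelPrime_self.1 (hβ ▸ hαβ))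
  obtain ⟨n, q, r, hq⟩ := exists_C_pow_mul_eq_mul_add_C α β p
  have hr : r = 0 := hψ (by simpa [(RingHom.mem_ker).1 hp, hψh] using congrArg ψ hq.symm)
  rw [hr, C_0, add_zero, ← C_pow] at hq
  exact ((isPrimitive_C_mul_X_sub_C hαβ).isRelPrime_C (pow_ne_zero n hα)).dvd_of_dvd_mul_left
    ⟨q, hq.trans (mul_comm _ _)⟩

end Polynomial

namespace MvPolynomial

theorem injective_aeval_monomial_one {R σ τ : Type*} [CommSemiring R] (v : σ → τ →₀ ℕ)
    (hv : Function.Injective (Finsupp.linearCombination ℕ v)) :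
    Function.Injective (aeval (R := R) fun i => monomial (v i) (1 : R)) := by
  have hmap : (aeval (R := R) fun i => monomial (v i) (1 : R)) =
      AddMonoidAlgebra.mapDomainAlgHom R R (Finsupp.linearCombination ℕ v).toAddMonoidHom := by
    refine algHom_ext fun i => ?_
    rw [aeval_X]
    show _ = AddMonoidAlgebra.mapDomain _ (AddMonoidAlgebra.single (Finsupp.single i 1) 1)
    rw [AddMonoidAlgebra.mapDomain_single]
    simp [single_eq_monomial]
  rw [hmap]
  exact AddMonoidAlgebra.mapDomain_injective hv

end MvPolynomial

theorem injective_aeval_b_sq_c_abc_bc_sq :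
    Function.Injective (aeval (R := ℚ) ![b ^ 2 * c, a * b * c, b * c ^ 2]) := by
  let v : Fin 3 → Fin 3 →₀ ℕ := ![Finsupp.single 1 2 + Finsupp.single 2 1,
    Finsupp.single 0 1 + Finsupp.single 1 1 + Finsupp.single 2 1,
    Finsupp.single 1 1 + Finsupp.single 2 2]
  have hv : Function.Injective (Finsupp.linearCombination ℕ v) := by
    intro d e hde
    have h0 := DFunLike.congr_fun hde 0
    have h1 := DFunLike.congr_fun hde 1
    have h2 := DFunLike.congr_fun hde 2
    ext j
    fin_cases j <;>
      simp [v, Finsupp.linearCombination_apply, Finsupp.sum_fintype, Fin.sum_univ_three]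
        at h0 h1 h2 ⊢ <;>
      omega
  have hmonomial : ![b ^ 2 * c, a * b * c, b * c ^ 2] = fun i => monomial (v i) (1 : ℚ) := by
    funext i; fin_cases i <;> simp [v, X, monomial_mul, monomial_pow]
  rw [hmonomial]
  exact injective_aeval_monomial_one v hv

theorem injective_aeval_c_sub {u : MvPolynomial (Fin 3) ℚ} (hu : aeval ![a, b, c + u] u = u) :
    Function.Injective (aeval (R := ℚ) ![a, b, c - u]) := by
  have hinv : (aeval ![a, b, c + u]).comp (aeval ![a, b, c - u]) = AlgHom.id ℚ _ :=
    algHom_ext fun i => by fin_cases i <;> simp [-aeval_eq_bind₁, hu]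
  exact Function.LeftInverse.injective (g := aeval ![a, b, c + u]) fun p => by
    rw [← AlgHom.comp_apply, hinv, AlgHom.id_apply]

theorem injective_aeval_mul_a_add_c :
    Function.Injective (aeval (R := ℚ) ![b ^ 2 * (a + c), a * b * (a + c), b * c * (a + c)]) := by
  have hcomp : (aeval ![a, b, c - a]).comp
      (aeval ![b ^ 2 * (a + c), a * b * (a + c), b * c * (a + c)]) =
      (aeval ![b ^ 2 * c, a * b * c, b * c ^ 2]).comp (aeval ![a, b, c - b]) :=
    algHom_ext fun i => by fin_cases i <;> simp; ring
  refine Function.Injective.of_comp (f := aeval ![a, b, c - a]) ?_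
  rw [← AlgHom.coe_comp, hcomp, AlgHom.coe_comp]
  exact injective_aeval_b_sq_c_abc_bc_sq.comp (injective_aeval_c_sub (by simp))

-- `ℚ[y,z,t]` is `MvPolynomial (Fin 3) ℚ` here, with `y, z, t` as `X 0, X 1, X 2`.
theorem isRelPrime_X_mul_X_add_X_X_mul_X_sq :
    IsRelPrime (X 0 * (X 1 + X 2) : MvPolynomial (Fin 3) ℚ) (X 1 * X 2 ^ 2) := by
  have hX (i j : Fin 3) (hij : i ≠ j) : IsRelPrime (X i : MvPolynomial (Fin 3) ℚ) (X j) :=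
    X_prime.irreducible.isRelPrime_iff_not_dvd.2 (by simpa using hij)
  have h1 : IsRelPrime (X 1 + X 2 : MvPolynomial (Fin 3) ℚ) (X 1) := by
    simpa using (hX 2 1 (by decide)).mul_add_right_left 1
  have h2 : IsRelPrime (X 1 + X 2 : MvPolynomial (Fin 3) ℚ) (X 2) := by
    simpa using (hX 1 2 (by decide)).add_mul_right_left 1
  exact ((hX 0 1 (by decide)).mul_right (hX 0 2 (by decide)).pow_right).mul_left
    (h1.mul_right h2.pow_right)

theorem finSuccEquiv_implicit_equation :
    finSuccEquiv ℚ 3 (x * y * (z + t) - z * t ^ 2) =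
      Polynomial.C (X 0 * (X 1 + X 2)) * Polynomial.X - Polynomial.C (X 1 * X 2 ^ 2) := by
  rw [show (1 : Fin 4) = Fin.succ 0 from rfl, show (2 : Fin 4) = Fin.succ 1 from rfl,
    show (3 : Fin 4) = Fin.succ 2 from rfl]
  simp only [map_sub, map_mul, map_add, map_pow, finSuccEquiv_X_zero, finSuccEquiv_X_succ]
  ring

theorem ker_aeval_eq_span_implicit_equation :
    RingHom.ker (MvPolynomial.aeval
        (![a * c ^ 2, b ^ 2 * (a + c), a * b * (a + c), b * c * (a + c)]) :
        MvPolynomial (Fin 4) ℚ →ₐ[ℚ] MvPolynomial (Fin 3) ℚ) =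
      Ideal.span {x * y * (z + t) - z * t ^ 2} := by
  set g : MvPolynomial (Fin 3) ℚ →ₐ[ℚ] MvPolynomial (Fin 3) ℚ :=
    aeval ![b ^ 2 * (a + c), a * b * (a + c), b * c * (a + c)]
  set ψ := Polynomial.eval₂AlgHom g (a * c ^ 2) fun _ => Commute.all _ _
  have hψC (r : MvPolynomial (Fin 3) ℚ) : ψ (Polynomial.C r) = g r := Polynomial.eval₂_C _ _
  have hψX : ψ Polynomial.X = a * c ^ 2 := Polynomial.eval₂_X _ _
  have hφ : (MvPolynomial.aeval
        (![a * c ^ 2, b ^ 2 * (a + c), a * b * (a + c), b * c * (a + c)]) :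
        MvPolynomial (Fin 4) ℚ →ₐ[ℚ] MvPolynomial (Fin 3) ℚ) =
      ψ.comp (finSuccEquiv ℚ 3 : _ →ₐ[ℚ] _) := by
    refine algHom_ext fun i => Fin.cases ?_ (fun j => ?_) i
    · simp [finSuccEquiv_X_zero, hψX]
    · rw [AlgHom.comp_apply, AlgEquiv.coe_toAlgHom, finSuccEquiv_X_succ, hψC, aeval_X, aeval_X,
        Matrix.cons_val_succ]
  have hψC_inj : Function.Injective (ψ.toRingHom.comp Polynomial.C) := fun p q h =>
    injective_aeval_mul_a_add_c <| by
      simpa only [RingHom.comp_apply, AlgHom.toRingHom_eq_coe, RingHom.coe_coe, hψC] using h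
  have hψH : ψ (Polynomial.C (X 0 * (X 1 + X 2)) * Polynomial.X - Polynomial.C (X 1 * X 2 ^ 2))
      = 0 := by
    simp only [map_sub, map_mul, map_add, map_pow, hψC, hψX, g, aeval_X, Matrix.cons_val_zero,
      Matrix.cons_val_one, Matrix.cons_val]
    ring
  rw [hφ]
  show RingHom.ker (ψ.toRingHom.comp (finSuccEquiv ℚ 3).toRingEquiv.toRingHom) = _
  rw [← RingHom.comap_ker, Polynomial.ker_eq_span_C_mul_X_sub_C _ hψC_inj
    isRelPrime_X_mul_X_add_X_X_mul_X_sq hψH, ← finSuccEquiv_implicit_equation]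
  ext p
  simp only [Ideal.mem_comap, Ideal.mem_span_singleton]
  exact map_dvd_iff _

/-- The kernel of `ℚ[x,y,z,t] → ℚ[a,b,c]`, `x ↦ ac²`, `y ↦ b²(a+c)`, `z ↦ ab(a+c)`,
`t ↦ bc(a+c)`, is the principal ideal generated by the irreducible polynomial
`xy(z+t) - zt²`: the implicit equation of the image of the rational map `ℙ² ⇢ ℙ³` given by
`(ac² : b²(a+c) : ab(a+c) : bc(a+c))` is `H = xy(z+t) - zt²`. -/
theorem implicit_equation_of_example :
    RingHom.ker (MvPolynomial.aeval
        (![a * c ^ 2, b ^ 2 * (a + c), a * b * (a + c), b * c * (a + c)]) :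
        MvPolynomial (Fin 4) ℚ →ₐ[ℚ] MvPolynomial (Fin 3) ℚ) =
      Ideal.span {x * y * (z + t) - z * t ^ 2} ∧
    Irreducible (x * y * (z + t) - z * t ^ 2) := by
  refine ⟨ker_aeval_eq_span_implicit_equation, ?_⟩
  have hH : x * y * (z + t) - z * t ^ 2 ≠ 0 := fun h0 =>
    (Polynomial.isPrimitive_C_mul_X_sub_C isRelPrime_X_mul_X_add_X_X_mul_X_sq).ne_zero <| by
      rw [← finSuccEquiv_implicit_equation, h0, map_zero]
  have hprime := ker_aeval_eq_span_implicit_equation ▸ RingHom.ker_isPrime _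
  exact ((Ideal.span_singleton_prime hH).1 hprime).irreducible
end
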